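/- arXiv:2601.10411 — 10 statements merged into one kernel-verified Lean document; each statement's English description precedes it below -/
import Mathlib

section
/- If z_1,...,z_n are complex numbers in the open unit disc and Λ = (-1)^n ∏_{j=1}^n z_j, then ∑_{j,k=1}^n 1/(1 - conj(z_j) z_k) ≥ n²/(1 - |Λ|²). (Note the double sum includes diagonal terms j = k.) -/
open Finset ComplexConjugate
open scoped ComplexOrder

noncomputable def gsAI : List ℂ → List (ℂ → ℂ)
  | [] => []
  | a :: l => (fun w => (Real.sqrt (1 - ‖a‖^2) : ℂ) / (1 - conj a * w)) ::
      (gsAI l).map (fun f => fun w => (w - a) / (1 - conj a * w) * f w)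

lemma one_sub_ne (x : ℂ) (h : ‖x‖ < 1) : (1:ℂ) - x ≠ 0 := by
  intro he
  rw [sub_eq_zero] at he
  rw [← he] at h
  simp at h

lemma den_ne (a w : ℂ) (ha : ‖a‖ < 1) (hw : ‖w‖ < 1) : (1:ℂ) - conj a * w ≠ 0 := by
  apply one_sub_ne
  rw [norm_mul, RCLike.norm_conj]
  nlinarith [norm_nonneg a, norm_nonneg w]

lemma keyAI (l : List ℂ) (hl : ∀ a ∈ l, ‖a‖ < 1) (Z W : ℂ) (hZ : ‖Z‖ < 1) (hW : ‖W‖ < 1) :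
    ((gsAI l).map (fun f => f Z * conj (f W))).sum
      = (1 - (l.map (fun a => (Z - a) / (1 - conj a * Z))).prod
          * conj ((l.map (fun a => (W - a) / (1 - conj a * W))).prod))
        / (1 - Z * conj W) := by
  induction l with
  | nil => simp [gsAI]
  | cons a l ih =>
      have ha : ‖a‖ < 1 := hl a List.mem_cons_self
      have ih' := ih (fun b hb => hl b (List.mem_cons_of_mem a hb))
      have hc1 : (1:ℂ) - conj a * Z ≠ 0 := den_ne a Z ha hZ
      have hc1' : (1:ℂ) - conj a * W ≠ 0 := den_ne a W ha hW
      have hc2 : (1:ℂ) - a * conj W ≠ 0 := by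
        apply one_sub_ne; rw [norm_mul, RCLike.norm_conj]
        nlinarith [norm_nonneg a, norm_nonneg W]
      have hc3 : (1:ℂ) - Z * conj W ≠ 0 := by
        apply one_sub_ne; rw [norm_mul, RCLike.norm_conj]
        nlinarith [norm_nonneg Z, norm_nonneg W]
      set P := (l.map (fun a => (Z - a) / (1 - conj a * Z))).prod with hP
      set Q := (l.map (fun a => (W - a) / (1 - conj a * W))).prod with hQ
      have hsq : ((Real.sqrt (1 - ‖a‖^2) : ℝ) : ℂ) * ((Real.sqrt (1 - ‖a‖^2) : ℝ) : ℂ)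
          = 1 - a * conj a := by
        rw [← Complex.ofReal_mul, Real.mul_self_sqrt (by nlinarith [norm_nonneg a])]
        rw [Complex.mul_conj]
        have hns : Complex.normSq a = ‖a‖^2 := by
          rw [Complex.normSq_eq_norm_sq]
        rw [hns]
        push_cast
        ring
      simp only [gsAI, List.map_cons, List.map_map, List.sum_cons, List.prod_cons]
      have hmap : ((gsAI l).map ((fun f => f Z * conj (f W)) ∘
          (fun f => fun w => (w - a) / (1 - conj a * w) * f w))).sum
          = ((Z - a) / (1 - conj a * Z) * conj ((W - a) / (1 - conj a * W)))
            * ((gsAI l).map (fun f => f Z * conj (f W))).sum := by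
        rw [← List.sum_map_mul_left]
        refine congrArg List.sum (List.map_congr_left fun f _ => ?_)
        simp only [Function.comp_apply, map_mul]
        ring
      rw [hmap, ih']
      simp only [map_div₀, map_sub, map_mul, Complex.conj_conj, map_one,
        Complex.conj_ofReal]
      rw [div_mul_div_comm, hsq]
      rw [← hP, ← hQ]
      clear_value P Q
      field_simp
      ring

theorem additive_inequality (n : ℕ) (z : Fin n → ℂ) (hz : ∀ j, ‖z j‖ < 1)
    (Λ : ℂ) (hΛ : Λ = (-1) ^ n * ∏ j, z j) :
    ((n : ℂ) ^ 2 / (1 - (‖Λ‖ : ℂ) ^ 2)) ≤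
      ∑ j, ∑ k, 1 / (1 - (starRingEnd ℂ) (z j) * z k) := by
  classical
  set L : List ℂ := List.ofFn z with hL
  set G : List (ℂ → ℂ) := gsAI L with hG
  set g : Fin G.length → (ℂ → ℂ) := G.get with hg
  set B : ℂ → ℂ := fun w => ∏ j, (w - z j) / (1 - conj (z j) * w) with hB
  have hmemL : ∀ a ∈ L, ‖a‖ < 1 := by
    intro a ha
    rw [hL, List.mem_ofFn] at ha
    obtain ⟨j, rfl⟩ := ha
    exact hz j
  -- Fin-indexed form of the key identity
  have sumform : ∀ Z W : ℂ, ‖Z‖ < 1 → ‖W‖ < 1 →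
      ∑ i, g i Z * conj (g i W) = (1 - B Z * conj (B W)) / (1 - Z * conj W) := by
    intro Z W hZ hW
    have h1 := keyAI L hmemL Z W hZ hW
    have h2 : (G.map (fun f => f Z * conj (f W))).sum = ∑ i, g i Z * conj (g i W) := by
      conv_lhs => rw [← List.ofFn_get G, List.map_ofFn, Fin.sum_ofFn]
      rfl
    have h3 : ∀ w : ℂ, (L.map (fun a => (w - a) / (1 - conj a * w))).prod = B w := by
      intro w
      rw [hL, List.map_ofFn, hB]
      exact Fin.prod_ofFn _
    rw [← h2, h1, h3, h3]
  have hBk : ∀ k, B (z k) = 0 := by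
    intro k
    apply Finset.prod_eq_zero (Finset.mem_univ k)
    simp
  have hB0 : B 0 = Λ := by
    rw [hB, hΛ]
    simp only [zero_sub, mul_zero, sub_zero, div_one]
    calc ∏ x : Fin n, -z x = ∏ x : Fin n, (-1 : ℂ) * z x := by simp
      _ = (∏ _x : Fin n, (-1:ℂ)) * ∏ x : Fin n, z x := Finset.prod_mul_distrib
      _ = (-1) ^ n * ∏ x : Fin n, z x := by simp
  have h00 : ‖(0:ℂ)‖ < 1 := by simp
  set u : Fin G.length → ℂ := fun i => ∑ k, g i (z k) with hu
  set h : Fin G.length → ℂ := fun i => g i 0 with hh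
  -- the double sum
  have hS : (∑ j, ∑ k, 1 / (1 - conj (z j) * z k)) = ∑ i, u i * conj (u i) := by
    have hterm : ∀ j k, 1 / (1 - conj (z j) * z k) = ∑ i, g i (z k) * conj (g i (z j)) := by
      intro j k
      rw [sumform (z k) (z j) (hz k) (hz j), hBk k, zero_mul, sub_zero, mul_comm]
    calc (∑ j, ∑ k, 1 / (1 - conj (z j) * z k))
        = ∑ j, ∑ k, ∑ i, g i (z k) * conj (g i (z j)) := by
          refine Finset.sum_congr rfl fun j _ => Finset.sum_congr rfl fun k _ => hterm j k
      _ = ∑ i, ∑ j, ∑ k, g i (z k) * conj (g i (z j)) := by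
          rw [show (∑ j, ∑ k, ∑ i, g i (z k) * conj (g i (z j)))
              = ∑ j, ∑ i, ∑ k, g i (z k) * conj (g i (z j)) from
            Finset.sum_congr rfl fun j _ => Finset.sum_comm]
          exact Finset.sum_comm
      _ = ∑ i, (∑ k, g i (z k)) * conj (∑ j, g i (z j)) := by
          refine Finset.sum_congr rfl fun i _ => ?_
          rw [map_sum, Finset.sum_mul_sum]
          rw [Finset.sum_comm]
      _ = ∑ i, u i * conj (u i) := rfl
  have hN : ∑ i, u i * conj (h i) = (n : ℂ) := by
    have : ∀ k, ∑ i, g i (z k) * conj (g i 0) = 1 := by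
      intro k
      rw [sumform (z k) 0 (hz k) h00, hBk k, zero_mul, sub_zero, map_zero, mul_zero,
        sub_zero, div_one]
    calc ∑ i, u i * conj (h i) = ∑ i, ∑ k, g i (z k) * conj (g i 0) := by
          refine Finset.sum_congr rfl fun i _ => ?_
          rw [hu, hh, Finset.sum_mul]
      _ = ∑ k, ∑ i, g i (z k) * conj (g i 0) := Finset.sum_comm
      _ = ∑ k : Fin n, (1:ℂ) := Finset.sum_congr rfl fun k _ => this k
      _ = n := by simp
  have hT : ∑ i, h i * conj (h i) = 1 - ((‖Λ‖:ℝ) : ℂ)^2 := by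
    rw [show ∑ i, h i * conj (h i) = ∑ i, g i 0 * conj (g i 0) from rfl,
      sumform 0 0 h00 h00, hB0]
    rw [Complex.mul_conj]
    simp [Complex.normSq_eq_norm_sq]
  set Sr : ℝ := ∑ i, ‖u i‖^2 with hSrdef
  set Tr : ℝ := ∑ i, ‖h i‖^2 with hTrdef
  have hmc : ∀ w : ℂ, w * conj w = ((‖w‖^2 : ℝ) : ℂ) := by
    intro w
    rw [Complex.mul_conj]
    simp [Complex.normSq_eq_norm_sq]
  have hSr : ∑ i, u i * conj (u i) = ((Sr : ℝ) : ℂ) := by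
    rw [hSrdef]
    push_cast
    exact Finset.sum_congr rfl fun i _ => by rw [hmc]; push_cast; ring
  have hTrC : ∑ i, h i * conj (h i) = ((Tr : ℝ) : ℂ) := by
    rw [hTrdef]
    push_cast
    exact Finset.sum_congr rfl fun i _ => by rw [hmc]; push_cast; ring
  have hTr : Tr = 1 - ‖Λ‖^2 := by
    have := hTrC.symm.trans hT
    have h2 : ((Tr : ℝ) : ℂ) = ((1 - ‖Λ‖^2 : ℝ) : ℂ) := by
      rw [this]; push_cast; ring
    exact_mod_cast h2
  have hSrnn : 0 ≤ Sr := Finset.sum_nonneg fun i _ => sq_nonneg _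
  have hTrnn : 0 ≤ Tr := Finset.sum_nonneg fun i _ => sq_nonneg _
  have hCS : (n:ℝ)^2 ≤ Sr * Tr := by
    have h1 : (n:ℝ) ≤ ∑ i, ‖u i‖ * ‖h i‖ := by
      calc (n:ℝ) = ‖(n:ℂ)‖ := by simp
        _ = ‖∑ i, u i * conj (h i)‖ := by rw [hN]
        _ ≤ ∑ i, ‖u i * conj (h i)‖ := norm_sum_le _ _
        _ = ∑ i, ‖u i‖ * ‖h i‖ := by
            refine Finset.sum_congr rfl fun i _ => ?_
            rw [norm_mul, RCLike.norm_conj]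
    have h2 : (∑ i, ‖u i‖ * ‖h i‖)^2 ≤ Sr * Tr :=
      Finset.sum_mul_sq_le_sq_mul_sq _ _ _
    have h3 : (n:ℝ)^2 ≤ (∑ i, ‖u i‖ * ‖h i‖)^2 := by
      apply pow_le_pow_left₀ (by positivity) h1
    linarith
  -- reduce to real inequality
  have goalR : (n:ℝ)^2 / (1 - ‖Λ‖^2) ≤ Sr := by
    rw [← hTr]
    rcases eq_or_lt_of_le hTrnn with hT0 | hT0
    · have hn0 : (n:ℝ)^2 = 0 := by nlinarith
      rw [← hT0, hn0]
      simpa using hSrnn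
    · rw [div_le_iff₀ hT0]
      exact hCS
  calc ((n : ℂ) ^ 2 / (1 - ((‖Λ‖:ℝ) : ℂ) ^ 2))
      = (((n:ℝ)^2 / (1 - ‖Λ‖^2) : ℝ) : ℂ) := by push_cast; ring_nf
    _ ≤ ((Sr : ℝ) : ℂ) := Complex.real_le_real.mpr goalR
    _ = ∑ j, ∑ k, 1 / (1 - conj (z j) * z k) := by rw [hS, hSr]
end

section
/- If z_1,...,z_n in the open unit disc satisfy ∑_{j,k} 1/(1 - conj(z_j) z_k) = n²/(1 - |Λ|²) where Λ = (-1)^n ∏ z_j, then z_1,...,z_n are precisely the n roots of the polynomial z^n + Λ. -/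
open Finset Polynomial Complex


noncomputable def uu (zz : ℕ → ℂ) (k : ℕ) (w : ℂ) : ℂ :=
  (∏ i ∈ Finset.range k, ((w - zz i) / (1 - (starRingEnd ℂ) (zz i) * w))) /
    (1 - (starRingEnd ℂ) (zz k) * w)

noncomputable def uut (zz : ℕ → ℂ) (k : ℕ) (y : ℂ) : ℂ :=
  (∏ i ∈ Finset.range k, ((y - (starRingEnd ℂ) (zz i)) / (1 - zz i * y))) /
    (1 - zz k * y)

lemma aux_ne {a x : ℂ} (ha : ‖a‖ < 1) (hx : ‖x‖ ≤ 1) : 1 - a * x ≠ 0 := by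
  intro h
  have : a * x = 1 := by linear_combination -h
  have : ‖a * x‖ = 1 := by rw [this]; simp
  rw [norm_mul] at this
  nlinarith [norm_nonneg a, norm_nonneg x]

lemma CD (zz : ℕ → ℂ) (hz : ∀ i, ‖zz i‖ < 1) (n : ℕ) (w y : ℂ)
    (hw : ‖w‖ ≤ 1) (hy : ‖y‖ < 1) :
    ∑ k ∈ Finset.range n, (1 - (starRingEnd ℂ) (zz k) * zz k) * uu zz k w * uut zz k y
    = (1 - (∏ i ∈ Finset.range n, ((w - zz i) / (1 - (starRingEnd ℂ) (zz i) * w))) *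
        (∏ i ∈ Finset.range n, ((y - (starRingEnd ℂ) (zz i)) / (1 - zz i * y)))) / (1 - w * y) := by
  have h3 : 1 - w * y ≠ 0 := by
    rw [mul_comm]; exact aux_ne hy hw
  induction n with
  | zero => simp
  | succ n ih =>
    rw [Finset.sum_range_succ, Finset.prod_range_succ, Finset.prod_range_succ, ih]
    have h1 : 1 - (starRingEnd ℂ) (zz n) * w ≠ 0 := aux_ne (by simpa using hz n) hw
    have h2 : 1 - zz n * y ≠ 0 := aux_ne (hz n) hy.le
    unfold uu uut
    generalize (∏ i ∈ Finset.range n, ((w - zz i) / (1 - (starRingEnd ℂ) (zz i) * w))) = A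
    generalize (∏ i ∈ Finset.range n, ((y - (starRingEnd ℂ) (zz i)) / (1 - zz i * y))) = B
    rw [div_add' _ _ _ h3, div_eq_div_iff (by exact h3) h3]
    field_simp
    ring

lemma uut_conj (zz : ℕ → ℂ) (k : ℕ) (w : ℂ) :
    uut zz k ((starRingEnd ℂ) w) = (starRingEnd ℂ) (uu zz k w) := by
  simp [uu, uut, map_div₀, map_prod, map_sub, map_mul]

lemma uut_conj0 (zz : ℕ → ℂ) (k : ℕ) :
    uut zz k 0 = (starRingEnd ℂ) (uu zz k 0) := by
  simpa using uut_conj zz k 0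

lemma core (n : ℕ) (zz : ℕ → ℂ) (hz : ∀ i, ‖zz i‖ < 1) (Λ : ℂ)
    (hΛ : Λ = (-1)^n * ∏ i ∈ Finset.range n, zz i) (hΛn : ‖Λ‖ < 1)
    (heq : ∑ j ∈ Finset.range n, ∑ k ∈ Finset.range n,
        1 / (1 - (starRingEnd ℂ) (zz j) * zz k) = (n : ℂ)^2 / (1 - (‖Λ‖:ℂ)^2))
    (w : ℂ) (hw : ‖w‖ < 1) :
    (1 - (‖Λ‖:ℂ)^2) * ∑ j ∈ Finset.range n,
        ∏ i ∈ (Finset.range n).erase j, (1 - (starRingEnd ℂ) (zz i) * w)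
      = n * ((∏ i ∈ Finset.range n, (1 - (starRingEnd ℂ) (zz i) * w))
          - (starRingEnd ℂ) Λ * ∏ i ∈ Finset.range n, (w - zz i)) := by
  set T : ℂ := (‖Λ‖:ℂ)^2 with hTdef
  have hTne : (1:ℂ) - T ≠ 0 := by
    have : ((1 - ‖Λ‖^2 : ℝ) : ℂ) ≠ 0 := by
      rw [Complex.ofReal_ne_zero]; nlinarith [norm_nonneg Λ]
    rw [hTdef]; convert this using 1; push_cast; ring
  have hTconj : (starRingEnd ℂ) T = T := by rw [hTdef]; simp [← Complex.ofReal_pow]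
  have hTT : Λ * (starRingEnd ℂ) Λ = T := by
    rw [Complex.mul_conj, hTdef, Complex.normSq_eq_norm_sq]
    push_cast; ring
  have hBzero : ∀ l ∈ Finset.range n,
      ∏ i ∈ Finset.range n, ((zz l - zz i) / (1 - (starRingEnd ℂ) (zz i) * zz l)) = 0 := by
    intro l hl
    exact Finset.prod_eq_zero hl (by rw [sub_self, zero_div])
  have hB0 : ∏ i ∈ Finset.range n, (((0:ℂ) - zz i) / (1 - (starRingEnd ℂ) (zz i) * 0)) = Λ := by
    rw [hΛ]
    rw [show (-1:ℂ)^n = ∏ _i ∈ Finset.range n, (-1:ℂ) by simp, ← Finset.prod_mul_distrib]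
    exact Finset.prod_congr rfl (fun i _ => by simp)
  have hB0' : ∏ i ∈ Finset.range n, (((0:ℂ) - (starRingEnd ℂ) (zz i)) / (1 - zz i * 0))
      = (starRingEnd ℂ) Λ := by
    rw [show ∏ i ∈ Finset.range n, (((0:ℂ) - (starRingEnd ℂ) (zz i)) / (1 - zz i * 0))
        = (starRingEnd ℂ) (∏ i ∈ Finset.range n, (((0:ℂ) - zz i) / (1 - (starRingEnd ℂ) (zz i) * 0)))
      by rw [map_prod]; exact Finset.prod_congr rfl (fun i _ => by simp), hB0]
  set t : ℕ → ℂ := fun k => 1 - (starRingEnd ℂ) (zz k) * zz k with htdef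
  set Cc : ℕ → ℂ := fun k => ∑ l ∈ Finset.range n, uu zz k (zz l) with hCcdef
  set Dd : ℕ → ℂ := fun k => uu zz k 0 with hDddef
  -- rearrangement helper
  have rearr : ∀ (b : ℕ → ℂ), ∀ k, t k * Cc k * b k
      = ∑ l ∈ Finset.range n, t k * uu zz k (zz l) * b k := by
    intro b k
    rw [hCcdef]
    simp only [Finset.mul_sum, Finset.sum_mul]
  -- hS
  have hS : ∑ k ∈ Finset.range n, t k * Cc k * (starRingEnd ℂ) (Cc k) = (n:ℂ)^2 / (1 - T) := by
    have hcd : ∀ j ∈ Finset.range n, ∀ l ∈ Finset.range n,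
        ∑ k ∈ Finset.range n, t k * uu zz k (zz l) * (starRingEnd ℂ) (uu zz k (zz j))
          = 1 / (1 - (starRingEnd ℂ) (zz j) * zz l) := by
      intro j hj l hl
      have h := CD zz hz n (zz l) ((starRingEnd ℂ) (zz j)) (hz l).le (by simpa using hz j)
      simp only [uut_conj] at h
      rw [h, hBzero l hl, zero_mul, sub_zero]
      rw [mul_comm (zz l)]
    calc ∑ k ∈ Finset.range n, t k * Cc k * (starRingEnd ℂ) (Cc k)
        = ∑ k ∈ Finset.range n, ∑ j ∈ Finset.range n, ∑ l ∈ Finset.range n,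
            t k * uu zz k (zz l) * (starRingEnd ℂ) (uu zz k (zz j)) := by
          refine Finset.sum_congr rfl fun k _ => ?_
          rw [hCcdef]
          simp only [map_sum, Finset.mul_sum, Finset.sum_mul]
      _ = ∑ j ∈ Finset.range n, ∑ l ∈ Finset.range n, ∑ k ∈ Finset.range n,
            t k * uu zz k (zz l) * (starRingEnd ℂ) (uu zz k (zz j)) := by
          rw [Finset.sum_comm]
          exact Finset.sum_congr rfl fun j _ => Finset.sum_comm
      _ = ∑ j ∈ Finset.range n, ∑ l ∈ Finset.range n,
            1 / (1 - (starRingEnd ℂ) (zz j) * zz l) := by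
          refine Finset.sum_congr rfl fun j hj => Finset.sum_congr rfl fun l hl => hcd j hj l hl
      _ = (n:ℂ)^2 / (1 - T) := heq
  -- hN
  have hN : ∑ k ∈ Finset.range n, t k * Cc k * (starRingEnd ℂ) (Dd k) = (n:ℂ) := by
    have hcd : ∀ l ∈ Finset.range n,
        ∑ k ∈ Finset.range n, t k * uu zz k (zz l) * (starRingEnd ℂ) (Dd k) = 1 := by
      intro l hl
      have h := CD zz hz n (zz l) 0 (hz l).le (by simp)
      simp only [uut_conj0] at h
      rw [hDddef]
      rw [h, hBzero l hl, zero_mul, sub_zero, mul_zero, sub_zero, div_one]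
    calc ∑ k ∈ Finset.range n, t k * Cc k * (starRingEnd ℂ) (Dd k)
        = ∑ k ∈ Finset.range n, ∑ l ∈ Finset.range n,
            t k * uu zz k (zz l) * (starRingEnd ℂ) (Dd k) := by
          exact Finset.sum_congr rfl fun k _ => rearr (fun k => (starRingEnd ℂ) (Dd k)) k
      _ = ∑ l ∈ Finset.range n, ∑ k ∈ Finset.range n,
            t k * uu zz k (zz l) * (starRingEnd ℂ) (Dd k) := Finset.sum_comm
      _ = ∑ l ∈ Finset.range n, (1:ℂ) := Finset.sum_congr rfl hcd
      _ = (n:ℂ) := by simp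
  -- hD
  have hD : ∑ k ∈ Finset.range n, t k * Dd k * (starRingEnd ℂ) (Dd k) = 1 - T := by
    have h := CD zz hz n 0 0 (by simp) (by simp)
    simp only [uut_conj0] at h
    rw [hB0, hB0'] at h
    simpa [hTT] using h
  -- equality case
  have hKey : ∀ k ∈ Finset.range n, Cc k * (1 - T) = (n:ℂ) * Dd k := by
    set E : ℕ → ℂ := fun k => Cc k * (1 - T) - (n:ℂ) * Dd k with hEdef
    have hconjE : ∀ k, (starRingEnd ℂ) (E k)
        = (starRingEnd ℂ) (Cc k) * (1 - T) - (n:ℂ) * (starRingEnd ℂ) (Dd k) := by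
      intro k
      rw [hEdef]
      simp [map_sub, map_mul, hTconj]
    have hNconj : ∑ k ∈ Finset.range n, t k * Dd k * (starRingEnd ℂ) (Cc k) = (n:ℂ) := by
      have h1 : ∑ k ∈ Finset.range n, t k * Dd k * (starRingEnd ℂ) (Cc k)
          = (starRingEnd ℂ) (∑ k ∈ Finset.range n, t k * Cc k * (starRingEnd ℂ) (Dd k)) := by
        rw [map_sum]
        refine Finset.sum_congr rfl fun k _ => ?_
        simp only [htdef, map_mul, map_sub, map_one, Complex.conj_conj]
        ring
      rw [h1, hN]
      simp
    have hzero : ∑ k ∈ Finset.range n, ((1 - ‖zz k‖^2) * ‖E k‖^2 : ℝ) = (0:ℝ) := by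
      have hC : ((∑ k ∈ Finset.range n, ((1 - ‖zz k‖^2) * ‖E k‖^2 : ℝ) : ℝ) : ℂ)
          = ∑ k ∈ Finset.range n, t k * (E k * (starRingEnd ℂ) (E k)) := by
        push_cast
        refine Finset.sum_congr rfl fun k _ => ?_
        have h1 : t k = ((1 - ‖zz k‖^2 : ℝ) : ℂ) := by
          simp only [htdef]
          rw [mul_comm, Complex.mul_conj, Complex.normSq_eq_norm_sq]
          push_cast; ring
        have h2 : E k * (starRingEnd ℂ) (E k) = ((‖E k‖^2 : ℝ) : ℂ) := by
          rw [Complex.mul_conj, Complex.normSq_eq_norm_sq]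
        rw [h1, h2]; push_cast; ring
      have hC0 : ∑ k ∈ Finset.range n, t k * (E k * (starRingEnd ℂ) (E k)) = 0 := by
        have expand : ∀ k ∈ Finset.range n, t k * (E k * (starRingEnd ℂ) (E k)) =
            (1-T)*(1-T)*(t k * Cc k * (starRingEnd ℂ) (Cc k))
              - (n:ℂ)*(1-T)*(t k * Cc k * (starRingEnd ℂ) (Dd k))
              - (n:ℂ)*(1-T)*(t k * Dd k * (starRingEnd ℂ) (Cc k))
              + (n:ℂ)*(n:ℂ)*(t k * Dd k * (starRingEnd ℂ) (Dd k)) := by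
          intro k _
          rw [hconjE k, hEdef]
          ring
        rw [Finset.sum_congr rfl expand]
        rw [Finset.sum_add_distrib, Finset.sum_sub_distrib, Finset.sum_sub_distrib,
          ← Finset.mul_sum, ← Finset.mul_sum, ← Finset.mul_sum, ← Finset.mul_sum]
        rw [hS, hN, hNconj, hD]
        field_simp
        ring
      have := hC.trans hC0
      exact_mod_cast this
    intro k hk
    have hterm := (Finset.sum_eq_zero_iff_of_nonneg (fun k _ =>
      mul_nonneg (by nlinarith [hz k, norm_nonneg (zz k)]) (sq_nonneg ‖E k‖))).mp hzero k hk
    have h1 : (0:ℝ) < 1 - ‖zz k‖^2 := by nlinarith [hz k, norm_nonneg (zz k)]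
    have hEk : E k = 0 := by
      have : ‖E k‖^2 = 0 := by
        rcases mul_eq_zero.mp hterm with h | h
        · linarith
        · exact h
      simpa [pow_eq_zero_iff] using this
    rw [hEdef] at hEk
    linear_combination hEk
  have hkey' : ∀ k ∈ Finset.range n,
      (starRingEnd ℂ) (Cc k) * (1 - T) = (n:ℂ) * (starRingEnd ℂ) (Dd k) := by
    intro k hk
    have := congrArg (starRingEnd ℂ) (hKey k hk)
    simpa [map_mul, map_sub, hTconj] using this
  -- pointwise identity at w
  have hFk : ∀ j ∈ Finset.range n,
      ∑ k ∈ Finset.range n, t k * uu zz k w * (starRingEnd ℂ) (uu zz k (zz j))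
        = 1 / (1 - (starRingEnd ℂ) (zz j) * w) := by
    intro j hj
    have h := CD zz hz n w ((starRingEnd ℂ) (zz j)) hw.le (by simpa using hz j)
    simp only [uut_conj] at h
    rw [h]
    have h0 : ∏ i ∈ Finset.range n,
        (((starRingEnd ℂ) (zz j) - (starRingEnd ℂ) (zz i)) / (1 - zz i * (starRingEnd ℂ) (zz j))) = 0 :=
      Finset.prod_eq_zero hj (by rw [sub_self, zero_div])
    rw [h0, mul_zero, sub_zero, mul_comm w]
  have hG : ∑ k ∈ Finset.range n, t k * uu zz k w * (starRingEnd ℂ) (Dd k)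
      = 1 - (starRingEnd ℂ) Λ * ∏ i ∈ Finset.range n, ((w - zz i) / (1 - (starRingEnd ℂ) (zz i) * w)) := by
    have h := CD zz hz n w 0 hw.le (by simp)
    simp only [uut_conj0] at h
    rw [hDddef]
    rw [h, hB0', mul_zero, sub_zero, div_one, mul_comm]
  have hmain : (1 - T) * ∑ j ∈ Finset.range n, 1 / (1 - (starRingEnd ℂ) (zz j) * w)
      = (n:ℂ) * (1 - (starRingEnd ℂ) Λ * ∏ i ∈ Finset.range n,
          ((w - zz i) / (1 - (starRingEnd ℂ) (zz i) * w))) := by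
    have step1 : ∀ k ∈ Finset.range n,
        ∑ j ∈ Finset.range n, t k * uu zz k w * (starRingEnd ℂ) (uu zz k (zz j))
          = t k * uu zz k w * (starRingEnd ℂ) (Cc k) := by
      intro k _
      rw [hCcdef]
      simp only [map_sum, Finset.mul_sum]
    calc (1 - T) * ∑ j ∈ Finset.range n, 1 / (1 - (starRingEnd ℂ) (zz j) * w)
        = (1 - T) * ∑ j ∈ Finset.range n, ∑ k ∈ Finset.range n,
            t k * uu zz k w * (starRingEnd ℂ) (uu zz k (zz j)) := by
          rw [Finset.sum_congr rfl (fun j hj => (hFk j hj).symm)]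
      _ = (1 - T) * ∑ k ∈ Finset.range n, t k * uu zz k w * (starRingEnd ℂ) (Cc k) := by
          rw [Finset.sum_comm]
          rw [Finset.sum_congr rfl step1]
      _ = ∑ k ∈ Finset.range n, t k * uu zz k w * ((n:ℂ) * (starRingEnd ℂ) (Dd k)) := by
          rw [Finset.mul_sum]
          refine Finset.sum_congr rfl fun k hk => ?_
          rw [← hkey' k hk]
          ring
      _ = (n:ℂ) * ∑ k ∈ Finset.range n, t k * uu zz k w * (starRingEnd ℂ) (Dd k) := by
          rw [Finset.mul_sum]
          exact Finset.sum_congr rfl fun k _ => by ring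
      _ = _ := by rw [hG]
  -- multiply through by the denominator product
  set W : ℂ := ∏ i ∈ Finset.range n, (1 - (starRingEnd ℂ) (zz i) * w) with hWdef
  have hWne : W ≠ 0 :=
    Finset.prod_ne_zero_iff.mpr fun i _ => aux_ne (by simpa using hz i) hw.le
  have hprod : ∏ i ∈ Finset.range n, ((w - zz i) / (1 - (starRingEnd ℂ) (zz i) * w))
      = (∏ i ∈ Finset.range n, (w - zz i)) / W := by
    rw [hWdef, Finset.prod_div_distrib]
  have hE2 : ∀ j ∈ Finset.range n,
      ∏ i ∈ (Finset.range n).erase j, (1 - (starRingEnd ℂ) (zz i) * w)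
        = 1 / (1 - (starRingEnd ℂ) (zz j) * w) * W := by
    intro j hj
    rw [hWdef, ← Finset.mul_prod_erase _ _ hj, one_div, inv_mul_cancel_left₀
      (aux_ne (by simpa using hz j) hw.le)]
  calc (1 - T) * ∑ j ∈ Finset.range n,
        ∏ i ∈ (Finset.range n).erase j, (1 - (starRingEnd ℂ) (zz i) * w)
      = (1 - T) * ∑ j ∈ Finset.range n, 1 / (1 - (starRingEnd ℂ) (zz j) * w) * W := by
        rw [Finset.sum_congr rfl hE2]
    _ = ((1 - T) * ∑ j ∈ Finset.range n, 1 / (1 - (starRingEnd ℂ) (zz j) * w)) * W := by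
        rw [← Finset.sum_mul]; ring
    _ = ((n:ℂ) * (1 - (starRingEnd ℂ) Λ * ((∏ i ∈ Finset.range n, (w - zz i)) / W))) * W := by
        rw [hmain, hprod]
    _ = (n:ℂ) * (W - (starRingEnd ℂ) Λ * ∏ i ∈ Finset.range n, (w - zz i)) := by
        field_simp


lemma reflect_lin (a : ℂ) : Polynomial.reflect 1 (X - C a) = 1 - C a * X := by
  rw [Polynomial.reflect_sub, Polynomial.reflect_C]
  simp

lemma reflect_prod_lin (s : Finset ℕ) (a : ℕ → ℂ) :
    Polynomial.reflect s.card (∏ i ∈ s, (X - C (a i))) = ∏ i ∈ s, (1 - C (a i) * X) := by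
  induction s using Finset.induction with
  | empty => simp [Polynomial.reflect_one]
  | @insert j s hj ih =>
    rw [Finset.prod_insert hj, Finset.prod_insert hj, Finset.card_insert_of_notMem hj,
      show s.card + 1 = 1 + s.card by ring]
    rw [Polynomial.reflect_mul (X - C (a j)) _ (by simp [Polynomial.natDegree_X_sub_C])
      ((Polynomial.natDegree_prod_le _ _).trans (by simp [Polynomial.natDegree_X_sub_C]))]
    rw [reflect_lin, ih]

lemma derivative_prod_finset (s : Finset ℕ) (f : ℕ → ℂ[X]) :
    derivative (∏ i ∈ s, f i) = ∑ j ∈ s, (∏ i ∈ s.erase j, f i) * derivative (f j) := by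
  induction s using Finset.induction with
  | empty => simp
  | @insert j s hj ih =>
    rw [Finset.prod_insert hj, derivative_mul, Finset.sum_insert hj, Finset.erase_insert hj, ih,
      Finset.mul_sum]
    congr 1
    · ring
    · refine Finset.sum_congr rfl fun i hi => ?_
      have hij : i ≠ j := fun h => hj (h ▸ hi)
      rw [Finset.erase_insert_of_ne hij.symm, Finset.prod_insert (fun h => hj (Finset.mem_of_mem_erase h))]
      ring

lemma sum_erase_eq (n : ℕ) (a : ℕ → ℂ) :
    ∑ j ∈ Finset.range n, ∏ i ∈ (Finset.range n).erase j, (1 - C (a i) * X)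
      = C (n:ℂ) * (∏ i ∈ Finset.range n, (1 - C (a i) * X))
        - X * derivative (∏ i ∈ Finset.range n, (1 - C (a i) * X)) := by
  rw [derivative_prod_finset]
  simp only [derivative_sub, derivative_one, derivative_C_mul, derivative_X, mul_one, zero_sub]
  have key : ∀ j ∈ Finset.range n,
      X * ((∏ i ∈ (Finset.range n).erase j, (1 - C (a i) * X)) * (-C (a j)))
        = (∏ i ∈ Finset.range n, (1 - C (a i) * X))
          - ∏ i ∈ (Finset.range n).erase j, (1 - C (a i) * X) := by
    intro j hj
    rw [← Finset.mul_prod_erase _ _ hj]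
    ring
  rw [Finset.mul_sum, Finset.sum_congr rfl key, Finset.sum_sub_distrib, Finset.sum_const,
    Finset.card_range, nsmul_eq_mul]
  rw [show ((n:ℂ[X])) = C (n:ℂ) by simp]
  ring

lemma lam_norm_lt (n : ℕ) (hn : 0 < n) (zz : ℕ → ℂ) (hz : ∀ i, ‖zz i‖ < 1) (Λ : ℂ)
    (hΛ : Λ = (-1)^n * ∏ i ∈ Finset.range n, zz i) : ‖Λ‖ < 1 := by
  obtain ⟨m, rfl⟩ := Nat.exists_eq_succ_of_ne_zero hn.ne'
  have : ‖Λ‖ = ∏ i ∈ Finset.range (m+1), ‖zz i‖ := by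
    rw [hΛ, norm_mul, norm_pow, norm_neg, norm_one, one_pow, one_mul, norm_prod]
  rw [this, Finset.prod_range_succ]
  have h1 : ∏ i ∈ Finset.range m, ‖zz i‖ ≤ 1 :=
    Finset.prod_le_one (fun i _ => norm_nonneg _) (fun i _ => (hz i).le)
  have h2 : (0:ℝ) ≤ ∏ i ∈ Finset.range m, ‖zz i‖ :=
    Finset.prod_nonneg (fun i _ => norm_nonneg _)
  nlinarith [hz m, norm_nonneg (zz m)]


lemma coeff_X_mul_deriv (p : ℂ[X]) (m : ℕ) : (X * derivative p).coeff m = m * p.coeff m := by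
  cases m with
  | zero => simp [Polynomial.mul_coeff_zero]
  | succ k =>
    rw [Polynomial.coeff_X_mul, Polynomial.coeff_derivative]
    push_cast; ring

theorem additive_equality_case (n : ℕ) (hn : 0 < n) (z : Fin n → ℂ)
    (hz : ∀ j, ‖z j‖ < 1) (Λ : ℂ) (hΛ : Λ = (-1) ^ n * ∏ j, z j)
    (heq : ∑ j, ∑ k, 1 / (1 - (starRingEnd ℂ) (z j) * z k)
      = (n : ℂ) ^ 2 / (1 - (‖Λ‖ : ℂ) ^ 2)) :
    ∏ j, (X - C (z j)) = X ^ n + C Λ := by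
  classical
  set zz : ℕ → ℂ := fun i => if h : i < n then z ⟨i, h⟩ else 0 with hzz
  have hzzval : ∀ j : Fin n, zz j.1 = z j := by
    intro j; simp [hzz, j.isLt]
  have hzznorm : ∀ i, ‖zz i‖ < 1 := by
    intro i
    by_cases h : i < n
    · simp only [hzz, dif_pos h]; exact hz _
    · simp [hzz, dif_neg h]
  have hΛ' : Λ = (-1)^n * ∏ i ∈ Finset.range n, zz i := by
    rw [hΛ, ← Fin.prod_univ_eq_prod_range]
    congr 1
    exact (Finset.prod_congr rfl fun j _ => (hzzval j).symm)
  have heq' : ∑ j ∈ Finset.range n, ∑ k ∈ Finset.range n,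
      1 / (1 - (starRingEnd ℂ) (zz j) * zz k) = (n : ℂ)^2 / (1 - (‖Λ‖:ℂ)^2) := by
    rw [← heq, ← Fin.sum_univ_eq_sum_range]
    refine Finset.sum_congr rfl fun j _ => ?_
    rw [← Fin.sum_univ_eq_sum_range]
    exact Finset.sum_congr rfl fun k _ => by rw [hzzval, hzzval]
  have hΛn : ‖Λ‖ < 1 := lam_norm_lt n hn zz hzznorm Λ hΛ'
  have hcore := core n zz hzznorm Λ hΛ' hΛn heq'
  set T : ℂ := (‖Λ‖:ℂ)^2 with hTdef
  have hTne : (1:ℂ) - T ≠ 0 := by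
    have : ((1 - ‖Λ‖^2 : ℝ) : ℂ) ≠ 0 := by
      rw [Complex.ofReal_ne_zero]; nlinarith [norm_nonneg Λ]
    rw [hTdef]; convert this using 1; push_cast; ring
  have hTT : Λ * (starRingEnd ℂ) Λ = T := by
    rw [Complex.mul_conj, hTdef, Complex.normSq_eq_norm_sq]
    push_cast; ring
  set P : ℂ[X] := ∏ i ∈ Finset.range n, (X - C (zz i)) with hP
  set Ps : ℂ[X] := ∏ i ∈ Finset.range n, (1 - C ((starRingEnd ℂ) (zz i)) * X) with hPs
  -- polynomial identity
  have hpoly : C (1 - T) * (C (n:ℂ) * Ps - X * derivative Ps)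
      = C (n:ℂ) * (Ps - C ((starRingEnd ℂ) Λ) * P) := by
    rw [← sum_erase_eq n (fun i => (starRingEnd ℂ) (zz i))]
    apply Polynomial.eq_of_infinite_eval_eq
    have hball : {x : ℂ | ‖x‖ < 1}.Infinite := by
      apply Set.infinite_of_injective_forall_mem (f := fun k : ℕ => ((1/(k+2) : ℝ) : ℂ))
      · intro a b hab
        simp only [Complex.ofReal_inj] at hab
        have ha : ((a:ℝ) + 2) ≠ 0 := by positivity
        have hb : ((b:ℝ) + 2) ≠ 0 := by positivity
        rw [div_eq_div_iff ha hb] at hab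
        have : (a:ℝ) = b := by linarith
        exact_mod_cast this
      · intro k
        have hk : (0:ℝ) < (k:ℝ) + 2 := by positivity
        simp only [Set.mem_setOf_eq, Complex.norm_real, Real.norm_eq_abs]
        rw [abs_of_pos (by positivity), div_lt_one hk]
        linarith
    refine hball.mono fun x hx => ?_
    simp only [Set.mem_setOf_eq] at hx ⊢
    have h := hcore x hx
    simp only [hPs, hP, eval_mul, eval_sub, eval_add, eval_C, eval_X, eval_one,
      eval_finset_sum, eval_prod]
    exact h
  have hTconj : (starRingEnd ℂ) T = T := by rw [hTdef]; simp [← Complex.ofReal_pow]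
  -- coefficient relation between Ps and P
  have hqp : ∀ m, m ≤ n → Ps.coeff m = (starRingEnd ℂ) (P.coeff (n - m)) := by
    intro m hm
    have h1 : Ps = Polynomial.reflect n (Polynomial.map (starRingEnd ℂ) P) := by
      rw [hP, Polynomial.map_prod]
      simp only [Polynomial.map_sub, Polynomial.map_X, Polynomial.map_C]
      have hr := reflect_prod_lin (Finset.range n) (fun i => (starRingEnd ℂ) (zz i))
      rw [Finset.card_range] at hr
      rw [hr]
    rw [h1, Polynomial.coeff_reflect, Polynomial.revAt_le hm, Polynomial.coeff_map]
  have hcoeff : ∀ m : ℕ, m ≤ n →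
      (1 - T) * ((n:ℂ) - (m:ℂ)) * (starRingEnd ℂ) (P.coeff (n - m))
        = (n:ℂ) * ((starRingEnd ℂ) (P.coeff (n-m)) - (starRingEnd ℂ) Λ * P.coeff m) := by
    intro m hm
    have hc := congrArg (fun q : ℂ[X] => q.coeff m) hpoly
    rw [Polynomial.coeff_C_mul, Polynomial.coeff_sub, Polynomial.coeff_C_mul,
      coeff_X_mul_deriv, Polynomial.coeff_C_mul, Polynomial.coeff_sub,
      Polynomial.coeff_C_mul, hqp m hm] at hc
    linear_combination hc
  have hvanish : ∀ m, 1 ≤ m → m < n → P.coeff m = 0 := by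
    intro m h1 h2
    have hA := hcoeff m h2.le
    have hB0 := hcoeff (n - m) (Nat.sub_le n m)
    rw [show n - (n - m) = m from Nat.sub_sub_self h2.le, Nat.cast_sub h2.le] at hB0
    have hB := congrArg (starRingEnd ℂ) hB0
    simp only [map_mul, map_sub, Complex.conj_conj, map_natCast, map_one, hTconj] at hB
    have key : ((1:ℂ)-T)^2 * (m:ℂ) * ((n:ℂ)-(m:ℂ)) * P.coeff m = 0 := by
      linear_combination (((1:ℂ)-T)*((n:ℂ)-(m:ℂ)) - (n:ℂ)) * hB - (n:ℂ)*Λ * hA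
        + (n:ℂ)^2 * (P.coeff m) * hTT
    have hmne : (m:ℂ) ≠ 0 := Nat.cast_ne_zero.mpr (by omega)
    have hnm : ((n:ℂ)-(m:ℂ)) ≠ 0 := by
      rw [← Nat.cast_sub h2.le]
      exact Nat.cast_ne_zero.mpr (by omega)
    have h2ne : ((1:ℂ)-T)^2 ≠ 0 := pow_ne_zero _ hTne
    simpa [mul_eq_zero, h2ne, hmne, hnm] using key
  -- final assembly
  have hPmonic : P.Monic := monic_prod_of_monic _ _ fun i _ => monic_X_sub_C _
  have hPdeg : P.natDegree = n := by
    rw [hP, Polynomial.natDegree_prod_of_monic _ _ (fun i _ => monic_X_sub_C _)]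
    simp [Polynomial.natDegree_X_sub_C]
  have hp0 : P.coeff 0 = Λ := by
    rw [Polynomial.coeff_zero_eq_eval_zero, hP, Polynomial.eval_prod, hΛ']
    rw [show (-1:ℂ)^n = ∏ _i ∈ Finset.range n, (-1:ℂ) by simp, ← Finset.prod_mul_distrib]
    exact Finset.prod_congr rfl fun i _ => by simp
  have hgoal : P = X^n + C Λ := by
    apply Polynomial.ext
    intro m
    rcases lt_trichotomy m n with hlt | heqm | hgt
    · rcases Nat.eq_zero_or_pos m with rfl | hpos
      · simp [Polynomial.coeff_X_pow, hn.ne', hp0]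
        omega
      · rw [hvanish m hpos hlt]
        simp [Polynomial.coeff_X_pow, Polynomial.coeff_C, hlt.ne, hpos.ne']
    · subst heqm
      rw [← hPdeg, hPmonic.coeff_natDegree, hPdeg]
      simp [Polynomial.coeff_X_pow, Polynomial.coeff_C, hn.ne']
    · rw [Polynomial.coeff_eq_zero_of_natDegree_lt (hPdeg ▸ hgt)]
      simp [Polynomial.coeff_X_pow, Polynomial.coeff_C, hgt.ne', (show ¬ m = 0 by omega)]
  have hfin : ∏ j : Fin n, (X - C (z j)) = P := by
    rw [hP, ← Fin.prod_univ_eq_prod_range]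
    exact Finset.prod_congr rfl fun j _ => by rw [hzzval]
  rw [hfin, hgoal]
end

section
/- If ω_1,...,ω_n are complex numbers of modulus 1 and 0 < a < 1, then ∑_{j,k=1}^n 1/(1 - a·conj(ω_j)·ω_k) ≥ n²/(1 - a^n), where the left-hand side is real. -/
open Finset
open scoped ComplexOrder

open Complex Metric intervalIntegral
open scoped Real

noncomputable section


lemma cauchy_circle (f : ℂ → ℂ) (hf : DifferentiableOn ℂ f (closedBall 0 1)) (w : ℂ)
    (hw : ‖w‖ < 1) :
    ∫ θ in (0:ℝ)..(2*π), circleMap 0 1 θ * (circleMap 0 1 θ - w)⁻¹ * f (circleMap 0 1 θ)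
      = 2 * π * f w := by
  have h1 : DiffContOnCl ℂ f (ball (0:ℂ) 1) := by
    apply DifferentiableOn.diffContOnCl
    rwa [closure_ball (0:ℂ) one_ne_zero]
  have h2 := h1.circleIntegral_sub_inv_smul (show w ∈ ball (0:ℂ) 1 by simpa [mem_ball, dist_eq] using hw)
  rw [circleIntegral] at h2
  simp only [deriv_circleMap, smul_eq_mul] at h2
  have h3 : ∀ θ : ℝ, circleMap 0 1 θ * I * ((circleMap 0 1 θ - w)⁻¹ * f (circleMap 0 1 θ))
      = I * (circleMap 0 1 θ * (circleMap 0 1 θ - w)⁻¹ * f (circleMap 0 1 θ)) := by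
    intro θ; ring
  simp only [h3] at h2
  rw [intervalIntegral.integral_const_mul] at h2
  apply mul_left_cancel₀ I_ne_zero
  rw [h2]; ring

lemma ne_one_sub (c z : ℂ) (hc : ‖c‖ < 1) (hz : ‖z‖ ≤ 1) : 1 - c * z ≠ 0 := by
  intro h
  have h1 : ‖c * z‖ < 1 := by
    rw [norm_mul]
    calc ‖c‖ * ‖z‖ ≤ ‖c‖ * 1 := by nlinarith [norm_nonneg c, norm_nonneg z]
    _ < 1 := by simpa using hc
  have : (c * z) = 1 := by linear_combination -h
  rw [this] at h1; simp at h1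

lemma diff_ker (c : ℂ) (hc : ‖c‖ < 1) :
    DifferentiableOn ℂ (fun z => (1 - c * z)⁻¹) (closedBall 0 1) := by
  apply DifferentiableOn.inv
  · fun_prop
  · intro z hz
    exact ne_one_sub c z hc (by simpa [mem_closedBall, dist_eq] using hz)

lemma conj_ker (u z : ℂ) (hu : ‖u‖ < 1) (hz : ‖z‖ = 1) :
    (starRingEnd ℂ) ((1 - (starRingEnd ℂ) u * z)⁻¹) = z * (z - u)⁻¹ := by
  have hz0 : z ≠ 0 := by intro h; rw [h] at hz; simp at hz
  have hzu : z - u ≠ 0 := by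
    intro h
    have : z = u := by linear_combination h
    rw [this] at hz; rw [hz] at hu; simp at hu
  have hcz : (starRingEnd ℂ) z = z⁻¹ := by rw [Complex.inv_eq_conj hz]
  rw [map_inv₀, map_sub, map_one, map_mul, Complex.conj_conj, hcz]
  field_simp

lemma B_diff {n : ℕ} (w : Fin n → ℂ) (hw : ∀ j, ‖w j‖ < 1) :
    DifferentiableOn ℂ (fun z => ∏ j, (w j - z) * (1 - (starRingEnd ℂ) (w j) * z)⁻¹)
      (closedBall 0 1) := by
  apply DifferentiableOn.fun_finsetProd
  intro j _
  apply DifferentiableOn.mul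
  · fun_prop
  · exact diff_ker _ (by simpa using hw j)

lemma norm_factor (u z : ℂ) (hz : ‖z‖ = 1) : ‖1 - (starRingEnd ℂ) u * z‖ = ‖u - z‖ := by
  have hz0 : z ≠ 0 := by intro h; rw [h] at hz; simp at hz
  have h1 : 1 - (starRingEnd ℂ) u * z = z * ((starRingEnd ℂ) z - (starRingEnd ℂ) u) := by
    have : z * (starRingEnd ℂ) z = 1 := by
      rw [Complex.mul_conj]; norm_cast
      rw [← Complex.sq_norm]
      rw [hz]; norm_num
    linear_combination -this
  rw [h1, norm_mul, hz, one_mul, ← map_sub, RCLike.norm_conj, norm_sub_rev]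

lemma norm_B {n : ℕ} (w : Fin n → ℂ) (hw : ∀ j, ‖w j‖ < 1) (z : ℂ) (hz : ‖z‖ = 1) :
    ‖∏ j, (w j - z) * (1 - (starRingEnd ℂ) (w j) * z)⁻¹‖ = 1 := by
  rw [norm_prod]
  apply Finset.prod_eq_one
  intro j _
  rw [norm_mul, norm_inv, norm_factor _ _ hz]
  have : (1 : ℂ) - (starRingEnd ℂ) (w j) * z ≠ 0 :=
    ne_one_sub _ _ (by simpa using hw j) (le_of_eq hz)
  have h2 : ‖w j - z‖ ≠ 0 := by
    rw [← norm_factor _ _ hz]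
    simpa [sub_eq_zero] using this
  field_simp

lemma intervalIntegral_conj {f : ℝ → ℂ} {a b : ℝ} :
    ∫ x in a..b, (starRingEnd ℂ) (f x) = (starRingEnd ℂ) (∫ x in a..b, f x) := by
  simp only [intervalIntegral, ← integral_conj, map_sub]

lemma norm_e (θ : ℝ) : ‖circleMap 0 1 θ‖ = 1 := by
  simp [norm_circleMap_zero]

lemma e_ne (θ : ℝ) (v : ℂ) (hv : ‖v‖ < 1) : circleMap 0 1 θ - v ≠ 0 := by
  intro h
  have : circleMap 0 1 θ = v := by linear_combination h
  rw [← this] at hv; rw [norm_e] at hv; exact lt_irrefl _ hv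

lemma int_mul_conjF {n : ℕ} (w : Fin n → ℂ) (hw : ∀ j, ‖w j‖ < 1) (φ : ℂ → ℂ)
    (hφ : DifferentiableOn ℂ φ (closedBall 0 1))
    (hc : Continuous fun θ => φ (circleMap 0 1 θ)) :
    ∫ θ in (0:ℝ)..(2*π), φ (circleMap 0 1 θ) *
        ∑ k, circleMap 0 1 θ * (circleMap 0 1 θ - w k)⁻¹
      = 2 * π * ∑ k, φ (w k) := by
  have h1 : ∀ θ : ℝ, φ (circleMap 0 1 θ) * ∑ k, circleMap 0 1 θ * (circleMap 0 1 θ - w k)⁻¹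
      = ∑ k, circleMap 0 1 θ * (circleMap 0 1 θ - w k)⁻¹ * φ (circleMap 0 1 θ) := by
    intro θ
    rw [Finset.mul_sum]
    exact Finset.sum_congr rfl (fun i _ => by ring)
  simp only [h1]
  rw [intervalIntegral.integral_finset_sum]
  · rw [Finset.mul_sum]
    congr 1
    ext k
    exact cauchy_circle φ hφ (w k) (hw k)
  · intro k _
    apply Continuous.intervalIntegrable
    apply Continuous.mul _ hc
    apply Continuous.mul (continuous_circleMap 0 1)
    apply Continuous.inv₀
    · exact (continuous_circleMap 0 1).sub continuous_const
    · intro θ; exact e_ne θ (w k) (hw k)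

lemma int_eval0 (φ : ℂ → ℂ) (hφ : DifferentiableOn ℂ φ (closedBall 0 1)) :
    ∫ θ in (0:ℝ)..(2*π), φ (circleMap 0 1 θ) = 2 * π * φ 0 := by
  have h := cauchy_circle φ hφ 0 (by norm_num)
  have h2 : ∀ θ : ℝ, circleMap 0 1 θ * (circleMap 0 1 θ - 0)⁻¹ * φ (circleMap 0 1 θ)
      = φ (circleMap 0 1 θ) := by
    intro θ
    have hne : circleMap 0 1 θ ≠ 0 := by
      intro hh; have := norm_e θ; rw [hh] at this; simp at this
    field_simp
    rw [sub_zero]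
  simp only [h2] at h
  exact h

lemma main_ineq {n : ℕ} (hn : 0 < n) (w : Fin n → ℂ) (s : ℝ) (hs0 : 0 < s) (hs1 : s < 1)
    (hws : ∀ j, ‖w j‖ = s) :
    (((n:ℝ)^2/(1 - (s^2)^n) : ℝ) : ℂ) ≤ ∑ k, ∑ j, (1 - (starRingEnd ℂ) (w j) * w k)⁻¹ := by
  have hπ : (0:ℝ) < π := Real.pi_pos
  have hw : ∀ j, ‖w j‖ < 1 := fun j => by rw [hws j]; exact hs1
  have hwc : ∀ j, ‖(starRingEnd ℂ) (w j)‖ < 1 := fun j => by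
    rw [RCLike.norm_conj]; exact hw j
  have han : (0:ℝ) < 1 - (s^2)^n := by
    have h1 : s^2 < 1 := by nlinarith
    have := pow_lt_one₀ (by positivity : (0:ℝ) ≤ s^2) h1 hn.ne'
    linarith
  set F : ℂ → ℂ := fun z => ∑ j, (1 - (starRingEnd ℂ) (w j) * z)⁻¹ with hF_def
  set Bf : ℂ → ℂ := fun z => ∏ j, (w j - z) * (1 - (starRingEnd ℂ) (w j) * z)⁻¹ with hB_def
  set b0 : ℂ := ∏ j, w j with hb0_def
  have hB0 : Bf 0 = b0 := by simp [hB_def, hb0_def]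
  set g : ℂ → ℂ := fun z => 1 - (starRingEnd ℂ) b0 * Bf z with hg_def
  set t : ℝ := n / (1 - (s^2)^n) with ht_def
  -- differentiability
  have hFd : DifferentiableOn ℂ F (closedBall 0 1) := by
    apply DifferentiableOn.fun_sum
    intro j _
    exact diff_ker _ (hwc j)
  have hBd : DifferentiableOn ℂ Bf (closedBall 0 1) := B_diff w hw
  have hgd : DifferentiableOn ℂ g (closedBall 0 1) := by
    apply DifferentiableOn.sub (differentiableOn_const 1)
    exact DifferentiableOn.const_mul hBd _
  -- continuity on the circle
  have cF : Continuous fun θ => F (circleMap 0 1 θ) := by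
    apply continuous_finset_sum
    intro j _
    apply Continuous.inv₀
    · exact continuous_const.sub (continuous_const.mul (continuous_circleMap 0 1))
    · intro θ; exact ne_one_sub _ _ (hwc j) (le_of_eq (norm_e θ))
  have cB : Continuous fun θ => Bf (circleMap 0 1 θ) := by
    apply continuous_finset_prod
    intro j _
    apply Continuous.mul
    · exact continuous_const.sub (continuous_circleMap 0 1)
    · apply Continuous.inv₀
      · exact continuous_const.sub (continuous_const.mul (continuous_circleMap 0 1))
      · intro θ; exact ne_one_sub _ _ (hwc j) (le_of_eq (norm_e θ))
  have cg : Continuous fun θ => g (circleMap 0 1 θ) :=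
    continuous_const.sub (continuous_const.mul cB)
  have ccF : Continuous fun θ => (starRingEnd ℂ) (F (circleMap 0 1 θ)) :=
    Complex.continuous_conj.comp cF
  have ccg : Continuous fun θ => (starRingEnd ℂ) (g (circleMap 0 1 θ)) :=
    Complex.continuous_conj.comp cg
  -- pointwise facts on the circle
  have hBnorm : ∀ θ : ℝ, ‖Bf (circleMap 0 1 θ)‖ = 1 := fun θ => norm_B w hw _ (norm_e θ)
  have hBne : ∀ θ : ℝ, Bf (circleMap 0 1 θ) ≠ 0 := fun θ => by
    intro h
    have := hBnorm θ; rw [h] at this; simp at this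
  have hBconj : ∀ θ : ℝ, (starRingEnd ℂ) (Bf (circleMap 0 1 θ)) = (Bf (circleMap 0 1 θ))⁻¹ :=
    fun θ => (Complex.inv_eq_conj (hBnorm θ)).symm
  have hFconj : ∀ θ : ℝ, (starRingEnd ℂ) (F (circleMap 0 1 θ))
      = ∑ k, circleMap 0 1 θ * (circleMap 0 1 θ - w k)⁻¹ := by
    intro θ
    rw [hF_def]
    simp only [map_sum]
    exact Finset.sum_congr rfl fun k _ => conj_ker (w k) _ (hw k) (norm_e θ)
  have hgconj : ∀ θ : ℝ, (starRingEnd ℂ) (g (circleMap 0 1 θ))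
      = 1 - b0 * (Bf (circleMap 0 1 θ))⁻¹ := by
    intro θ
    rw [hg_def]
    simp only [map_sub, map_one, map_mul, Complex.conj_conj, hBconj θ]
  -- the four integral identities
  have hI1 : ∫ θ in (0:ℝ)..(2*π), F (circleMap 0 1 θ) * (starRingEnd ℂ) (F (circleMap 0 1 θ))
      = 2*(π:ℂ) * ∑ k, F (w k) := by
    simp only [hFconj]
    exact int_mul_conjF w hw F hFd cF
  have hgw : ∀ k, g (w k) = 1 := by
    intro k
    have hBz : Bf (w k) = 0 := Finset.prod_eq_zero (Finset.mem_univ k) (by simp)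
    simp [hg_def, hBz]
  have hI2 : ∫ θ in (0:ℝ)..(2*π), g (circleMap 0 1 θ) * (starRingEnd ℂ) (F (circleMap 0 1 θ))
      = 2*(π:ℂ) * n := by
    simp only [hFconj]
    rw [int_mul_conjF w hw g hgd cg]
    simp [hgw]
  have hI3 : ∫ θ in (0:ℝ)..(2*π), F (circleMap 0 1 θ) * (starRingEnd ℂ) (g (circleMap 0 1 θ))
      = 2*(π:ℂ) * n := by
    have hpt : ∀ θ : ℝ, F (circleMap 0 1 θ) * (starRingEnd ℂ) (g (circleMap 0 1 θ))
        = (starRingEnd ℂ) (g (circleMap 0 1 θ) * (starRingEnd ℂ) (F (circleMap 0 1 θ))) := by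
      intro θ; rw [map_mul, Complex.conj_conj]; ring
    simp only [hpt]
    rw [_root_.intervalIntegral_conj, hI2]
    rw [show 2*(π:ℂ)*n = (((2*π*n:ℝ)):ℂ) by push_cast; ring, Complex.conj_ofReal]
  have hIB : ∫ θ in (0:ℝ)..(2*π), Bf (circleMap 0 1 θ) = 2*(π:ℂ) * b0 := by
    rw [int_eval0 Bf hBd, hB0]
  have hIBinv : ∫ θ in (0:ℝ)..(2*π), (Bf (circleMap 0 1 θ))⁻¹
      = 2*(π:ℂ) * (starRingEnd ℂ) b0 := by
    simp only [← hBconj]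
    rw [_root_.intervalIntegral_conj, hIB]
    rw [show 2*(π:ℂ)*b0 = (((2*π:ℝ)):ℂ)*b0 by push_cast; ring, map_mul, Complex.conj_ofReal]
    push_cast
    ring
  have hbb : (starRingEnd ℂ) b0 * b0 = ((s^2:ℝ):ℂ)^n := by
    rw [hb0_def, map_prod, ← Finset.prod_mul_distrib]
    have : ∀ j : Fin n, (starRingEnd ℂ) (w j) * w j = ((s^2:ℝ):ℂ) := by
      intro j
      rw [mul_comm, Complex.mul_conj]
      norm_cast
      rw [Complex.normSq_eq_norm_sq, hws j]
    rw [Finset.prod_congr rfl (fun j _ => this j)]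
    simp
  have hI4 : ∫ θ in (0:ℝ)..(2*π), g (circleMap 0 1 θ) * (starRingEnd ℂ) (g (circleMap 0 1 θ))
      = 2*(π:ℂ) * (1 - ((s^2:ℝ):ℂ)^n) := by
    have hpt : ∀ θ : ℝ, g (circleMap 0 1 θ) * (starRingEnd ℂ) (g (circleMap 0 1 θ))
        = (1 + (starRingEnd ℂ) b0 * b0) - b0 * (Bf (circleMap 0 1 θ))⁻¹
          - (starRingEnd ℂ) b0 * Bf (circleMap 0 1 θ) := by
      intro θ
      rw [hgconj θ, hg_def]
      have hne := hBne θ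
      field_simp
      ring
    simp only [hpt]
    have i1 : IntervalIntegrable (fun _ : ℝ => 1 + (starRingEnd ℂ) b0 * b0)
        MeasureTheory.volume 0 (2*π) := continuous_const.intervalIntegrable _ _
    have i2 : IntervalIntegrable (fun θ : ℝ => b0 * (Bf (circleMap 0 1 θ))⁻¹)
        MeasureTheory.volume 0 (2*π) :=
      (continuous_const.mul (cB.inv₀ hBne)).intervalIntegrable _ _
    have i3 : IntervalIntegrable (fun θ : ℝ => (starRingEnd ℂ) b0 * Bf (circleMap 0 1 θ))
        MeasureTheory.volume 0 (2*π) := (continuous_const.mul cB).intervalIntegrable _ _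
    rw [intervalIntegral.integral_sub (i1.sub i2) i3, intervalIntegral.integral_sub i1 i2,
        intervalIntegral.integral_const, intervalIntegral.integral_const_mul,
        intervalIntegral.integral_const_mul, hIB, hIBinv, hbb]
    simp only [sub_zero, Complex.real_smul]
    push_cast at hbb ⊢
    linear_combination (-4*(π:ℂ)) * hbb
  -- the quadratic nonnegativity
  have hr_def : True := trivial
  set r : ℝ := ∫ θ in (0:ℝ)..(2*π),
      Complex.normSq (F (circleMap 0 1 θ) - (t:ℂ) * g (circleMap 0 1 θ)) with hrdef
  have hr0 : 0 ≤ r := by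
    rw [hrdef]
    apply intervalIntegral.integral_nonneg (by positivity)
    intro θ _
    exact Complex.normSq_nonneg _
  have i1 : IntervalIntegrable (fun θ : ℝ => F (circleMap 0 1 θ) * (starRingEnd ℂ) (F (circleMap 0 1 θ)))
      MeasureTheory.volume 0 (2*π) := (cF.mul ccF).intervalIntegrable _ _
  have i2 : IntervalIntegrable (fun θ : ℝ => (t:ℂ) * (g (circleMap 0 1 θ) * (starRingEnd ℂ) (F (circleMap 0 1 θ))))
      MeasureTheory.volume 0 (2*π) := (continuous_const.mul (cg.mul ccF)).intervalIntegrable _ _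
  have i3 : IntervalIntegrable (fun θ : ℝ => (t:ℂ) * (F (circleMap 0 1 θ) * (starRingEnd ℂ) (g (circleMap 0 1 θ))))
      MeasureTheory.volume 0 (2*π) := (continuous_const.mul (cF.mul ccg)).intervalIntegrable _ _
  have i4 : IntervalIntegrable (fun θ : ℝ => (t:ℂ) * (t:ℂ) * (g (circleMap 0 1 θ) * (starRingEnd ℂ) (g (circleMap 0 1 θ))))
      MeasureTheory.volume 0 (2*π) := (continuous_const.mul (cg.mul ccg)).intervalIntegrable _ _
  have hrc : (r:ℂ) = (∫ θ in (0:ℝ)..(2*π), F (circleMap 0 1 θ) * (starRingEnd ℂ) (F (circleMap 0 1 θ)))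
      - (t:ℂ) * (∫ θ in (0:ℝ)..(2*π), g (circleMap 0 1 θ) * (starRingEnd ℂ) (F (circleMap 0 1 θ)))
      - (t:ℂ) * (∫ θ in (0:ℝ)..(2*π), F (circleMap 0 1 θ) * (starRingEnd ℂ) (g (circleMap 0 1 θ)))
      + (t:ℂ) * (t:ℂ) * (∫ θ in (0:ℝ)..(2*π), g (circleMap 0 1 θ) * (starRingEnd ℂ) (g (circleMap 0 1 θ))) := by
    have hcast : (r:ℂ) = ∫ θ in (0:ℝ)..(2*π),
        ((Complex.normSq (F (circleMap 0 1 θ) - (t:ℂ) * g (circleMap 0 1 θ)) : ℝ) : ℂ) := by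
      rw [hrdef]
      exact_mod_cast (RCLike.intervalIntegral_ofReal (𝕜 := ℂ)).symm
    rw [hcast]
    have hpt : ∀ θ : ℝ, ((Complex.normSq (F (circleMap 0 1 θ) - (t:ℂ) * g (circleMap 0 1 θ)) : ℝ) : ℂ)
        = F (circleMap 0 1 θ) * (starRingEnd ℂ) (F (circleMap 0 1 θ))
          - (t:ℂ) * (g (circleMap 0 1 θ) * (starRingEnd ℂ) (F (circleMap 0 1 θ)))
          - (t:ℂ) * (F (circleMap 0 1 θ) * (starRingEnd ℂ) (g (circleMap 0 1 θ)))
          + (t:ℂ) * (t:ℂ) * (g (circleMap 0 1 θ) * (starRingEnd ℂ) (g (circleMap 0 1 θ))) := by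
      intro θ
      rw [← Complex.mul_conj]
      rw [map_sub, map_mul, Complex.conj_ofReal]
      ring
    simp only [hpt]
    rw [intervalIntegral.integral_add ((i1.sub i2).sub i3) i4,
        intervalIntegral.integral_sub (i1.sub i2) i3, intervalIntegral.integral_sub i1 i2,
        intervalIntegral.integral_const_mul, intervalIntegral.integral_const_mul,
        intervalIntegral.integral_const_mul]
  rw [hI1, hI2, hI3, hI4] at hrc
  have hkey : (∑ k, F (w k)) = ((r/(2*π) + 2*t*n - t^2*(1 - (s^2)^n) : ℝ) : ℂ) := by
    have hπc : ((π:ℝ):ℂ) ≠ 0 := Complex.ofReal_ne_zero.mpr hπ.ne'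
    apply mul_left_cancel₀ (show (2*(π:ℂ)) ≠ 0 by simp [hπc])
    push_cast at hrc ⊢
    field_simp
    linear_combination -hrc
  have hswap : (∑ k, ∑ j, (1 - (starRingEnd ℂ) (w j) * w k)⁻¹) = ∑ k, F (w k) := rfl
  rw [hswap, hkey]
  rw [Complex.real_le_real]
  have h1 : 2*t*(n:ℝ) - t^2*(1-(s^2)^n) = (n:ℝ)^2/(1-(s^2)^n) := by
    rw [ht_def]
    field_simp
    ring
  have h2 : 0 ≤ r/(2*π) := div_nonneg hr0 (by positivity)
  linarith [h1, h2]

theorem key_corollary (n : ℕ) (ω : Fin n → ℂ) (hω : ∀ j, ‖ω j‖ = 1)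
    (a : ℝ) (ha0 : 0 < a) (ha1 : a < 1) :
    ((n : ℂ) ^ 2 / (1 - (a : ℂ) ^ n)) ≤
      ∑ j, ∑ k, 1 / (1 - (a : ℂ) * (starRingEnd ℂ) (ω j) * ω k) := by
  rcases Nat.eq_zero_or_pos n with hn | hn
  · subst hn; simp
  set s : ℝ := Real.sqrt a with hs_def
  have hs0 : 0 < s := Real.sqrt_pos.mpr ha0
  have hss : s^2 = a := Real.sq_sqrt ha0.le
  have hs1 : s < 1 := by nlinarith [Real.sqrt_nonneg a]
  have h := main_ineq hn (fun j => (s:ℂ) * ω j) s hs0 hs1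
    (fun j => by simp [norm_mul, hω j, abs_of_pos hs0])
  rw [hss] at h
  have hterm : ∀ j k : Fin n, (1 - (a:ℂ) * (starRingEnd ℂ) (ω j) * ω k)
      = 1 - (starRingEnd ℂ) ((s:ℂ) * ω j) * ((s:ℂ) * ω k) := by
    intro j k
    rw [map_mul, Complex.conj_ofReal]
    rw [show ((a:ℝ):ℂ) = (s:ℂ)*(s:ℂ) by rw [← hss]; push_cast; ring]
    ring
  have hsum : ∑ j, ∑ k, 1 / (1 - (a : ℂ) * (starRingEnd ℂ) (ω j) * ω k)
      = ∑ k, ∑ j, (1 - (starRingEnd ℂ) ((s:ℂ) * ω j) * ((s:ℂ) * ω k))⁻¹ := by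
    rw [Finset.sum_comm]
    exact Finset.sum_congr rfl fun k _ => Finset.sum_congr rfl fun j _ => by
      rw [one_div, hterm j k]
  rw [hsum]
  have hLHS : ((n : ℂ)^2 / (1 - (a:ℂ)^n)) = (((n:ℝ)^2/(1 - a^n) : ℝ) : ℂ) := by
    push_cast
    ring
  rw [hLHS]
  exact h

end
end

section
/- If z_1,...,z_n are the n roots of z^n + Λ with |Λ| = ρ^n, ρ > 1, then ∏_{j,k=1}^n |1 - conj(z_j) z_k| = (ρ^{2n} - 1)^n, where the product includes diagonal terms. -/
open Finset Polynomial

theorem product_at_regular_ngon (n : ℕ) (ρ : ℝ) (hρ : 1 < ρ) (Λ : ℂ)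
    (hΛ : ‖Λ‖ = ρ ^ n) (z : Fin n → ℂ)
    (hroots : ∏ j, (X - C (z j)) = X ^ n + C Λ) :
    ∏ j, ∏ k, ‖1 - (starRingEnd ℂ) (z j) * z k‖ = (ρ ^ (2 * n) - 1) ^ n := by
  rcases Nat.eq_zero_or_pos n with hn | hn
  · subst hn; simp
  have hρ0 : (0:ℝ) < ρ := by linarith
  have heval : ∀ w : ℂ, ∏ k, (w - z k) = w ^ n + Λ := by
    intro w
    have h := congrArg (Polynomial.eval w) hroots
    simpa [eval_prod] using h
  have hroot : ∀ j, (z j) ^ n = -Λ := by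
    intro j
    have h := heval (z j)
    rw [Finset.prod_eq_zero (Finset.mem_univ j) (by ring)] at h
    linear_combination -h
  have hΛne : Λ ≠ 0 := by
    intro h
    rw [h, norm_zero] at hΛ
    exact absurd hΛ.symm (ne_of_gt (pow_pos hρ0 n))
  have hzne : ∀ j, z j ≠ 0 := by
    intro j h
    have h2 := hroot j
    rw [h, zero_pow hn.ne'] at h2
    exact hΛne (neg_eq_zero.mp h2.symm)
  have hr2 : (1:ℝ) < ρ ^ (2 * n) := one_lt_pow₀ hρ (by omega)
  have key : ∀ j, ∏ k, ‖1 - (starRingEnd ℂ) (z j) * z k‖ = ρ ^ (2 * n) - 1 := by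
    intro j
    set c : ℂ := (starRingEnd ℂ) (z j) with hc
    have hcne : c ≠ 0 := by
      simp [hc, hzne j]
    have h1 : ∏ k, (1 - c * z k) = 1 + c ^ n * Λ := by
      have h2 : ∀ k, (1 - c * z k) = c * (c⁻¹ - z k) := by
        intro k
        field_simp
      rw [Finset.prod_congr rfl fun k _ => h2 k, Finset.prod_mul_distrib,
        Finset.prod_const, heval c⁻¹, Finset.card_univ, Fintype.card_fin]
      field_simp
      rw [mul_add, ← mul_pow, mul_one_div_cancel hcne, one_pow]
    have hcn : c ^ n = -(starRingEnd ℂ) Λ := by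
      rw [hc, ← map_pow, hroot j, map_neg]
    have h3 : ∏ k, (1 - c * z k) = ((1 : ℝ) - ρ ^ (2 * n) : ℝ) := by
      rw [h1, hcn]
      have : (starRingEnd ℂ) Λ * Λ = (Complex.normSq Λ : ℂ) := by
        rw [mul_comm, Complex.mul_conj]
      push_cast
      rw [neg_mul, this, Complex.normSq_eq_norm_sq, hΛ]
      push_cast
      ring
    calc ∏ k, ‖1 - c * z k‖ = ‖∏ k, (1 - c * z k)‖ := (norm_prod _ _).symm
      _ = ‖((1 : ℝ) - ρ ^ (2 * n) : ℝ)‖ := by rw [h3, Complex.norm_real]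
      _ = ρ ^ (2 * n) - 1 := by
          rw [Real.norm_eq_abs, abs_sub_comm, abs_of_pos (by linarith)]
  rw [Finset.prod_congr rfl fun j _ => key j, Finset.prod_const, Finset.card_univ,
    Fintype.card_fin]
end

section
/- For ρ > 1 and z_j = ρ ω_j with ω_j on the unit circle, j = 1,...,n, one has ∏_{j≠k} |1 - conj(z_j) z_k| = ρ^{n(n-1)} ∏_{j<k} ((ρ - ρ^{-1})² + |ω_j - ω_k|²). -/
open Finset Complex

lemma pair_lemma (ρ : ℝ) (hρ : 1 < ρ) (u v : ℂ) (hu : ‖u‖ = 1) (hv : ‖v‖ = 1) :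
    ‖1 - ((ρ:ℂ) * (starRingEnd ℂ) u) * ((ρ:ℂ) * v)‖ *
      ‖1 - ((ρ:ℂ) * (starRingEnd ℂ) v) * ((ρ:ℂ) * u)‖ =
    ρ ^ 2 * ((ρ - ρ⁻¹) ^ 2 + ‖u - v‖ ^ 2) := by
  have hρ0 : (ρ:ℝ) ≠ 0 := by positivity
  have hu1 : normSq u = 1 := by rw [normSq_eq_norm_sq, hu]; norm_num
  have hv1 : normSq v = 1 := by rw [normSq_eq_norm_sq, hv]; norm_num
  have hconj : (1 - ((ρ:ℂ) * (starRingEnd ℂ) v) * ((ρ:ℂ) * u))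
      = (starRingEnd ℂ) (1 - ((ρ:ℂ) * (starRingEnd ℂ) u) * ((ρ:ℂ) * v)) := by
    simp only [map_sub, map_mul, map_one, Complex.conj_conj, Complex.conj_ofReal]
    ring
  rw [hconj, RCLike.norm_conj, ← sq, Complex.sq_norm,
    show ‖u - v‖ ^ 2 = normSq (u - v) by rw [Complex.sq_norm]]
  have e1 : normSq (1 - ((ρ:ℂ) * (starRingEnd ℂ) u) * ((ρ:ℂ) * v))
      = 1 + ρ^2 * ρ^2 - 2 * (ρ^2 * (u * (starRingEnd ℂ) v).re) := by
    rw [normSq_sub]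
    simp [normSq_mul, hu1, hv1, Complex.normSq_conj, Complex.normSq_ofReal,
      Complex.mul_re, Complex.conj_re, Complex.conj_im, Complex.ofReal_re, Complex.ofReal_im]
    ring
  rw [e1, normSq_sub, hu1, hv1]
  field_simp
  ring

theorem dubickas_identity (n : ℕ) (ρ : ℝ) (hρ : 1 < ρ)
    (ω : Fin n → ℂ) (hω : ∀ j, ‖ω j‖ = 1) (z : Fin n → ℂ)
    (hz : ∀ j, z j = (ρ : ℂ) * ω j) :
    ∏ j, ∏ k ∈ Finset.univ \ {j}, ‖1 - (starRingEnd ℂ) (z j) * z k‖ =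
      ρ ^ (n * (n - 1)) *
        ∏ j, ∏ k ∈ Finset.Ioi j, ((ρ - ρ⁻¹) ^ 2 + ‖ω j - ω k‖ ^ 2) := by
  set g : Fin n → Fin n → ℝ :=
    fun j k => ‖1 - ((ρ:ℂ) * (starRingEnd ℂ) (ω j)) * ((ρ:ℂ) * (ω k))‖ with hgdef
  have hg : ∀ j k : Fin n, ‖1 - (starRingEnd ℂ) (z j) * z k‖ = g j k := by
    intro j k
    simp [hgdef, hz, map_mul, Complex.conj_ofReal, mul_comm, mul_left_comm]
  have hpow : ρ ^ (n * (n - 1)) = ∏ j : Fin n, ∏ k ∈ Finset.Ioi j, ρ ^ 2 := by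
    have key := Finset.prod_prod_Ioi_mul_eq_prod_prod_off_diag (fun _ _ : Fin n => ρ)
    simp only [Finset.prod_const, Finset.card_compl, Fintype.card_fin,
      Finset.card_singleton, ← sq] at key
    simp only [Finset.prod_const]
    rw [key, Finset.card_univ, Fintype.card_fin, ← pow_mul, Nat.mul_comm]
  calc ∏ j, ∏ k ∈ Finset.univ \ {j}, ‖1 - (starRingEnd ℂ) (z j) * z k‖
      = ∏ j, ∏ k ∈ Finset.univ \ {j}, g j k := by
        exact Finset.prod_congr rfl fun j _ => Finset.prod_congr rfl fun k _ => hg j k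
    _ = ∏ j, ∏ k ∈ Finset.Ioi j, g j k * g k j := by
        have key := Finset.prod_prod_Ioi_mul_eq_prod_prod_off_diag (fun a b : Fin n => g b a)
        simp only [Finset.compl_eq_univ_sdiff] at key
        convert key.symm using 2
    _ = ∏ j, ∏ k ∈ Finset.Ioi j, ρ ^ 2 * ((ρ - ρ⁻¹) ^ 2 + ‖ω j - ω k‖ ^ 2) :=
        Finset.prod_congr rfl fun j _ => Finset.prod_congr rfl fun k _ =>
          pair_lemma ρ hρ (ω j) (ω k) (hω j) (hω k)
    _ = ρ ^ (n * (n - 1)) * ∏ j, ∏ k ∈ Finset.Ioi j, ((ρ - ρ⁻¹) ^ 2 + ‖ω j - ω k‖ ^ 2) := by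
        rw [hpow, ← Finset.prod_mul_distrib]
        exact Finset.prod_congr rfl fun j _ => Finset.prod_mul_distrib
end

section
/- Let ω_1,...,ω_n be on the unit circle and define g(a) = n·log(1 - a^n) - ∑_{j,k=1}^n log|a - conj(ω_j) ω_k| for a ∈ (0,1) with a ≠ conj(ω_j)ω_k for all j,k. Then for such a, a·g'(a) = -n²/(1 - a^n) + ∑_{j,k} 1/(1 - a·conj(ω_j)·ω_k), and consequently g'(a) ≥ 0. -/
open Finset

section AuxiliaryLemmas
open Real Complex intervalIntegral Metric

open Real Complex intervalIntegral Metric Finset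

lemma cif_interval {F : ℂ → ℂ} (hF : DifferentiableOn ℂ F (closedBall 0 1))
    {w : ℂ} (hw : ‖w‖ < 1) :
    ∫ θ in (0:ℝ)..(2*π), circleMap 0 1 θ * (circleMap 0 1 θ - w)⁻¹ * F (circleMap 0 1 θ)
      = 2 * π * F w := by
  have hw' : w ∈ ball (0:ℂ) 1 := by simpa [mem_ball, dist_eq_norm] using hw
  have h := hF.circleIntegral_sub_inv_smul hw'
  rw [circleIntegral] at h
  simp only [deriv_circleMap, smul_eq_mul] at h
  have h2 : Complex.I * ∫ θ in (0:ℝ)..(2*π),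
      circleMap 0 1 θ * (circleMap 0 1 θ - w)⁻¹ * F (circleMap 0 1 θ)
      = Complex.I * (2 * π * F w) := by
    rw [← intervalIntegral.integral_const_mul]
    rw [show Complex.I * (2 * π * F w) = 2 * π * Complex.I * F w by ring, ← h]
    congr 1; ext θ; ring
  exact mul_left_cancel₀ Complex.I_ne_zero h2

lemma norm_one_sub_sq (w : ℂ) : ‖1 - w‖^2 = 1 - 2 * w.re + ‖w‖^2 := by
  rw [show ‖1 - w‖^2 = Complex.normSq (1-w) from by rw [Complex.sq_norm],
      show ‖w‖^2 = Complex.normSq w from by rw [Complex.sq_norm]]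
  simp [Complex.normSq_apply]
  ring

lemma norm_sq_conj_mul (K : ℂ → ℂ) (Kc : ℂ → ℂ) (z : ℂ) (h : (starRingEnd ℂ) (K z) = Kc z) :
    ‖Kc z‖^2 = (K z * Kc z).re := by
  rw [← h, Complex.mul_conj, RCLike.norm_conj]
  simp [Complex.normSq_eq_norm_sq]
  norm_cast

lemma key_ineq {n : ℕ} (ω : Fin n → ℂ) (hω : ∀ j, ‖ω j‖ = 1) {a : ℝ}
    (ha0 : 0 < a) (ha1 : a < 1) :
    (n:ℝ)^2 / (1 - a^n) ≤ (∑ j, ∑ k, (1 - (a:ℂ) * (starRingEnd ℂ) (ω j) * ω k)⁻¹).re := by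
  rcases Nat.eq_zero_or_pos n with hn | hn
  · subst hn; simp
  set s : ℝ := Real.sqrt a with hs
  have hs0 : 0 < s := Real.sqrt_pos.2 ha0
  have hs2 : s^2 = a := Real.sq_sqrt ha0.le
  have hs1 : s < 1 := by nlinarith [Real.sqrt_nonneg a]
  set u : Fin n → ℂ := fun j => (s:ℂ) * ω j with hu
  have hun : ∀ j, ‖u j‖ = s := by
    intro j; simp [hu, hω j, abs_of_pos hs0]
  have huu : ∀ j k, (starRingEnd ℂ) (u j) * u k = (a:ℂ) * (starRingEnd ℂ) (ω j) * ω k := by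
    intro j k
    simp only [hu, map_mul, Complex.conj_ofReal]
    rw [show ((s:ℂ)) * (starRingEnd ℂ) (ω j) * ((s:ℂ) * ω k)
        = ((s:ℂ) * (s:ℂ)) * (starRingEnd ℂ) (ω j) * ω k by ring]
    norm_cast
    rw [← hs2]; ring_nf
  -- denominators
  have d1 : ∀ (j : Fin n) (z : ℂ), ‖z‖ ≤ 1 → 1 - (starRingEnd ℂ) (u j) * z ≠ 0 := by
    intro j z hz h0
    have h1 : (starRingEnd ℂ) (u j) * z = 1 := by linear_combination -h0
    have h2 : ‖(starRingEnd ℂ) (u j) * z‖ < 1 := by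
      rw [norm_mul, RCLike.norm_conj, hun j]
      nlinarith [norm_nonneg z]
    rw [h1] at h2; simp at h2
  have d2 : ∀ (j : Fin n) (z : ℂ), ‖z‖ = 1 → z - u j ≠ 0 := by
    intro j z hz h0
    have : z = u j := by linear_combination h0
    rw [← hz, this, hun j] at hs1; exact lt_irrefl _ hs1
  -- functions
  set B : ℂ → ℂ := fun z => ∏ j, (z - u j) * (1 - (starRingEnd ℂ) (u j) * z)⁻¹ with hB
  set c0 : ℂ := ∏ j, -((starRingEnd ℂ) (u j)) with hc0
  set f : ℂ → ℂ := fun z => 1 - c0 * B z with hf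
  set K : ℂ → ℂ := fun z => ∑ j, (1 - (starRingEnd ℂ) (u j) * z)⁻¹ with hK
  set Kc : ℂ → ℂ := fun z => ∑ k, z * (z - u k)⁻¹ with hKc
  set cm : ℝ → ℂ := fun θ => circleMap 0 1 θ with hcm
  have hcmn : ∀ θ, ‖cm θ‖ = 1 := by
    intro θ; rw [hcm]; simp
  have hcmc : Continuous cm := continuous_circleMap 0 1
  -- conjugation identities on the circle
  have hzc1 : ∀ z : ℂ, ‖z‖ = 1 → (starRingEnd ℂ) z * z = 1 := by
    intro z hz
    rw [mul_comm, Complex.mul_conj]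
    norm_cast
    rw [Complex.normSq_eq_norm_sq, hz]; norm_num
  have hconjk : ∀ (j : Fin n) (z : ℂ), ‖z‖ = 1 →
      (starRingEnd ℂ) ((1 - (starRingEnd ℂ) (u j) * z)⁻¹) = z * (z - u j)⁻¹ := by
    intro j z hz
    rw [map_inv₀, map_sub, map_one, map_mul, Complex.conj_conj]
    have hrw : 1 - u j * (starRingEnd ℂ) z = (z - u j) * ((starRingEnd ℂ) z) := by
      rw [sub_mul]
      rw [show z * (starRingEnd ℂ) z = 1 by rw [mul_comm]; exact hzc1 z hz]
    rw [hrw, mul_inv]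
    have hzinv : ((starRingEnd ℂ) z)⁻¹ = z := inv_eq_of_mul_eq_one_right (hzc1 z hz)
    rw [hzinv]; ring
  have hconjK : ∀ z : ℂ, ‖z‖ = 1 → (starRingEnd ℂ) (K z) = Kc z := by
    intro z hz
    rw [hK, hKc, map_sum]
    exact Finset.sum_congr rfl fun j _ => hconjk j z hz
  have hBnorm : ∀ z : ℂ, ‖z‖ = 1 → ‖B z‖ = 1 := by
    intro z hz
    rw [hB]
    simp only [norm_prod, norm_mul, norm_inv]
    rw [Finset.prod_eq_one]
    intro j _
    have h1 : ‖1 - (starRingEnd ℂ) (u j) * z‖ = ‖z - u j‖ := by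
      calc ‖1 - (starRingEnd ℂ) (u j) * z‖ = ‖(starRingEnd ℂ) (z - u j) * z‖ := by
            congr 1
            rw [map_sub, sub_mul, hzc1 z hz]
        _ = ‖z - u j‖ := by rw [norm_mul, RCLike.norm_conj, hz, mul_one]
    rw [h1, mul_inv_cancel₀ (norm_ne_zero_iff.2 (d2 j z hz))]
  -- differentiability
  have hmem : ∀ z : ℂ, z ∈ closedBall (0:ℂ) 1 → ‖z‖ ≤ 1 := by
    intro z hz; simpa [mem_closedBall, dist_eq_norm] using hz
  have hkd : ∀ j : Fin n, DifferentiableOn ℂ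
      (fun z => (1 - (starRingEnd ℂ) (u j) * z)⁻¹) (closedBall 0 1) := by
    intro j
    apply DifferentiableOn.inv
    · exact (differentiable_const 1).differentiableOn.sub
        ((differentiable_id.const_mul _).differentiableOn)
    · intro z hz; exact d1 j z (hmem z hz)
  have hBd : DifferentiableOn ℂ B (closedBall 0 1) := by
    apply DifferentiableOn.fun_finsetProd
    intro j _
    exact ((differentiable_id.sub_const (u j)).differentiableOn).mul (hkd j)
  have hfd : DifferentiableOn ℂ f (closedBall 0 1) :=
    (differentiable_const 1).differentiableOn.sub
      (((differentiable_const c0).differentiableOn).mul hBd)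
  -- continuity in θ
  have hfc : Continuous fun θ => f (cm θ) :=
    hfd.continuousOn.comp_continuous hcmc fun θ =>
      mem_closedBall_zero_iff.2 (hcmn θ).le
  have hKcc : Continuous fun θ => Kc (cm θ) := by
    rw [hKc]
    apply continuous_finset_sum
    intro k _
    exact hcmc.mul ((hcmc.sub continuous_const).inv₀ fun θ => d2 k (cm θ) (hcmn θ))
  have hKco : Continuous fun θ => K (cm θ) := by
    rw [hK]
    apply continuous_finset_sum
    intro j _
    exact ((continuous_const.sub (continuous_const.mul hcmc)).inv₀
      fun θ => d1 j (cm θ) (hcmn θ).le)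
  have hBc : Continuous fun θ => B (cm θ) :=
    hBd.continuousOn.comp_continuous hcmc fun θ =>
      mem_closedBall_zero_iff.2 (hcmn θ).le
  have hun1 : ∀ k, ‖u k‖ < 1 := fun k => by rw [hun k]; exact hs1
  have hfu : ∀ k : Fin n, f (u k) = 1 := by
    intro k
    have hBz : B (u k) = 0 := by
      rw [hB]
      exact Finset.prod_eq_zero (mem_univ k) (by simp)
    simp [hf, hBz]
  -- I1 : cross integral
  have I1 : ∫ θ in (0:ℝ)..(2*π), f (cm θ) * Kc (cm θ) = 2 * π * n := by
    have hpt : ∀ θ, f (cm θ) * Kc (cm θ)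
        = ∑ k, cm θ * (cm θ - u k)⁻¹ * f (cm θ) := by
      intro θ; rw [hKc, Finset.mul_sum]
      exact Finset.sum_congr rfl fun k _ => by ring
    simp_rw [hpt]
    rw [intervalIntegral.integral_finset_sum]
    · rw [Finset.sum_congr rfl fun (k : Fin n) _ => cif_interval hfd (hun1 k)]
      simp [hfu]
      ring
    · intro k _
      apply Continuous.intervalIntegrable
      exact (hcmc.mul ((hcmc.sub continuous_const).inv₀
        fun θ => d2 k (cm θ) (hcmn θ))).mul hfc
  -- T
  set T : ℂ := ∑ j, ∑ k, (1 - (starRingEnd ℂ) (u j) * u k)⁻¹ with hT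
  -- I3 : ∫ K⋅Kc = 2π T
  have I3 : ∫ θ in (0:ℝ)..(2*π), K (cm θ) * Kc (cm θ) = 2 * π * T := by
    have hpt : ∀ θ, K (cm θ) * Kc (cm θ)
        = ∑ j, ∑ k, cm θ * (cm θ - u k)⁻¹ * (1 - (starRingEnd ℂ) (u j) * cm θ)⁻¹ := by
      intro θ
      rw [hK, hKc, Finset.sum_mul_sum]
      exact Finset.sum_congr rfl fun j _ => Finset.sum_congr rfl fun k _ => by ring
    simp_rw [hpt]
    rw [intervalIntegral.integral_finset_sum]
    · have : ∀ j : Fin n, ∫ θ in (0:ℝ)..(2*π),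
          (∑ k, cm θ * (cm θ - u k)⁻¹ * (1 - (starRingEnd ℂ) (u j) * cm θ)⁻¹)
          = ∑ k, (2 * π * (1 - (starRingEnd ℂ) (u j) * u k)⁻¹) := by
        intro j
        rw [intervalIntegral.integral_finset_sum]
        · exact Finset.sum_congr rfl fun k _ => cif_interval (hkd j) (hun1 k)
        · intro k _
          apply Continuous.intervalIntegrable
          exact (hcmc.mul ((hcmc.sub continuous_const).inv₀
            fun θ => d2 k (cm θ) (hcmn θ))).mul
            ((continuous_const.sub (continuous_const.mul hcmc)).inv₀
              fun θ => d1 j (cm θ) (hcmn θ).le)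
      rw [Finset.sum_congr rfl fun (j : Fin n) _ => this j]
      rw [hT, Finset.mul_sum]
      exact Finset.sum_congr rfl fun j _ => by rw [Finset.mul_sum]
    · intro j _
      apply Continuous.intervalIntegrable
      apply continuous_finset_sum
      intro k _
      exact (hcmc.mul ((hcmc.sub continuous_const).inv₀
        fun θ => d2 k (cm θ) (hcmn θ))).mul
        ((continuous_const.sub (continuous_const.mul hcmc)).inv₀
          fun θ => d1 j (cm θ) (hcmn θ).le)
  -- ∫ B = 2π B 0
  have IB : ∫ θ in (0:ℝ)..(2*π), B (cm θ) = 2 * π * B 0 := by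
    have h0 : ‖(0:ℂ)‖ < 1 := by simp
    have := cif_interval hBd h0
    rw [← this]
    congr 1; ext θ
    rw [sub_zero, mul_inv_cancel₀ (circleMap_ne_center one_ne_zero), one_mul]
  -- c0 * B 0 = (s^2)^n
  have hc0B0 : c0 * B 0 = (((s^2)^n : ℝ) : ℂ) := by
    have hB0 : B 0 = ∏ j, -(u j) := by
      rw [hB]; apply Finset.prod_congr rfl; intro j _; simp
    rw [hc0, hB0, ← Finset.prod_mul_distrib]
    have : ∀ j : Fin n, -(starRingEnd ℂ) (u j) * -(u j) = (((s^2) : ℝ) : ℂ) := by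
      intro j
      rw [neg_mul_neg, mul_comm, Complex.mul_conj]
      norm_cast
      rw [Complex.normSq_eq_norm_sq, hun j]
    rw [Finset.prod_congr rfl fun j _ => this j, Finset.prod_const]
    norm_cast
    simp [Finset.card_univ]
  have hc0n : ‖c0‖ = s^n := by
    rw [hc0, norm_prod]
    rw [Finset.prod_congr rfl fun (j : Fin n) _ => by
      rw [norm_neg, RCLike.norm_conj, hun j]]
    simp [Finset.card_univ]
  -- I2 : ∫ ‖f∘cm‖² = 2π(1 - aⁿ)
  have I2 : ∫ θ in (0:ℝ)..(2*π), ‖f (cm θ)‖^2 = 2 * π * (1 - a^n) := by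
    have hpt : ∀ θ, ‖f (cm θ)‖^2 = (1 + (s^2)^n) - 2 * ((c0 * B (cm θ)).re) := by
      intro θ
      rw [hf]
      rw [norm_one_sub_sq (c0 * B (cm θ))]
      rw [norm_mul, hc0n, hBnorm (cm θ) (hcmn θ), mul_one]
      rw [show (s^n)^2 = (s^2)^n by ring]
      ring
    simp_rw [hpt]
    rw [intervalIntegral.integral_sub, intervalIntegral.integral_const,
        intervalIntegral.integral_const_mul]
    · have hre : ∫ θ in (0:ℝ)..(2*π), (c0 * B (cm θ)).re
          = ((2:ℝ) * π * (s^2)^n) := by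
        have hint : IntervalIntegrable (fun θ => c0 * B (cm θ)) MeasureTheory.volume 0 (2*π) :=
          (continuous_const.mul hBc).intervalIntegrable _ _
        have := Complex.reCLM.intervalIntegral_comp_comm hint
        simp only [Complex.reCLM_apply] at this
        rw [this, intervalIntegral.integral_const_mul, IB,
            show c0 * (2 * π * B 0) = (2*π:ℝ) * (c0 * B 0) by push_cast; ring, hc0B0]
        norm_cast
      rw [hre]
      rw [show (s^2)^n = a^n by rw [hs2]]
      simp only [smul_eq_mul, sub_zero]
      ring
    · exact intervalIntegrable_const
    · apply Continuous.intervalIntegrable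
      exact continuous_const.mul (Complex.continuous_re.comp (continuous_const.mul hBc))
  -- I4 : ∫ ‖Kc∘cm‖² = 2π T.re
  have I4 : ∫ θ in (0:ℝ)..(2*π), ‖Kc (cm θ)‖^2 = 2 * π * T.re := by
    have hpt : ∀ θ, ‖Kc (cm θ)‖^2 = (K (cm θ) * Kc (cm θ)).re := fun θ =>
      norm_sq_conj_mul K Kc (cm θ) (hconjK (cm θ) (hcmn θ))
    simp_rw [hpt]
    have hint : IntervalIntegrable (fun θ => K (cm θ) * Kc (cm θ))
        MeasureTheory.volume 0 (2*π) := (hKco.mul hKcc).intervalIntegrable _ _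
    have := Complex.reCLM.intervalIntegral_comp_comm hint
    simp only [Complex.reCLM_apply] at this
    rw [this, I3]
    push_cast
    simp
  -- Cauchy–Schwarz
  have hπ : (0:ℝ) < 2 * π := by positivity
  set F : ℝ → ℝ := fun θ => ‖f (cm θ)‖ with hF
  set G : ℝ → ℝ := fun θ => ‖Kc (cm θ)‖ with hG
  have hFc : Continuous F := hfc.norm
  have hGc : Continuous G := hKcc.norm
  have step1 : 2 * π * n ≤ ∫ θ in (0:ℝ)..(2*π), F θ * G θ := by
    have h1 : ‖∫ θ in (0:ℝ)..(2*π), f (cm θ) * Kc (cm θ)‖ = 2 * π * n := by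
      rw [I1]
      rw [show ((2:ℂ) * π * n) = (((2 * π * n : ℝ)):ℂ) by push_cast; ring]
      rw [Complex.norm_real, Real.norm_eq_abs]
      exact abs_of_nonneg (by positivity)
    calc 2 * π * (n:ℝ) = ‖∫ θ in (0:ℝ)..(2*π), f (cm θ) * Kc (cm θ)‖ := h1.symm
      _ ≤ ∫ θ in (0:ℝ)..(2*π), ‖f (cm θ) * Kc (cm θ)‖ :=
          intervalIntegral.norm_integral_le_integral_norm hπ.le
      _ = ∫ θ in (0:ℝ)..(2*π), F θ * G θ := by
          congr 1; ext θ; rw [norm_mul]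
  set R : ℝ := ∫ θ in (0:ℝ)..(2*π), F θ * G θ with hR
  set A2 : ℝ := ∫ θ in (0:ℝ)..(2*π), F θ^2 with hA2
  set C2 : ℝ := ∫ θ in (0:ℝ)..(2*π), G θ^2 with hC2
  have hCS : R^2 ≤ A2 * C2 := by
    have hquad : ∀ t : ℝ, 0 ≤ A2 * (t * t) + (2 * R) * t + C2 := by
      intro t
      have hexp : A2 * (t * t) + (2 * R) * t + C2
          = ∫ θ in (0:ℝ)..(2*π), (t * F θ + G θ)^2 := by
        have : ∀ θ, (t * F θ + G θ)^2
            = (t * t) * F θ^2 + (2 * t) * (F θ * G θ) + G θ^2 := by intro θ; ring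
        simp_rw [this]
        have i1 : IntervalIntegrable (fun θ => (t*t) * F θ ^ 2)
            MeasureTheory.volume 0 (2*π) :=
          (continuous_const.mul (hFc.pow 2)).intervalIntegrable _ _
        have i2 : IntervalIntegrable (fun θ => (2*t) * (F θ * G θ))
            MeasureTheory.volume 0 (2*π) :=
          (continuous_const.mul (hFc.mul hGc)).intervalIntegrable _ _
        have i3 : IntervalIntegrable (fun θ => G θ ^ 2)
            MeasureTheory.volume 0 (2*π) := (hGc.pow 2).intervalIntegrable _ _
        rw [intervalIntegral.integral_add (i1.add i2) i3,
            intervalIntegral.integral_add i1 i2,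
            intervalIntegral.integral_const_mul, intervalIntegral.integral_const_mul]
        rw [hA2, hC2, hR]
        ring
      rw [hexp]
      apply intervalIntegral.integral_nonneg hπ.le
      intro θ _
      positivity
    have hd := discrim_le_zero hquad
    rw [discrim] at hd
    nlinarith
  -- assemble
  have hA2v : A2 = 2 * π * (1 - a^n) := by
    rw [hA2]; simp only [hF]; exact I2
  have hC2v : C2 = 2 * π * T.re := by
    rw [hC2]; simp only [hG]; exact I4
  have hTre : (n:ℝ)^2 ≤ (1 - a^n) * T.re := by
    have hRnn : 0 ≤ R := le_trans (by positivity) step1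
    have hsq : (2*π*n)^2 ≤ R^2 := pow_le_pow_left₀ (by positivity) step1 2
    have h4 : (2*π*(n:ℝ))^2 ≤ (2*π*(1 - a^n)) * (2*π*T.re) := by
      calc (2*π*(n:ℝ))^2 ≤ R^2 := hsq
        _ ≤ A2 * C2 := hCS
        _ = (2*π*(1 - a^n)) * (2*π*T.re) := by rw [hA2v, hC2v]
    have hpi2 : (0:ℝ) < π^2 := by positivity
    nlinarith
  have hTT : T = ∑ j, ∑ k, (1 - (a:ℂ) * (starRingEnd ℂ) (ω j) * ω k)⁻¹ := by
    rw [hT]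
    exact Finset.sum_congr rfl fun j _ => Finset.sum_congr rfl fun k _ => by rw [huu j k]
  rw [← hTT]
  have hpan : 0 < 1 - a^n := by
    have : a^n < 1 := pow_lt_one₀ ha0.le ha1 hn.ne'
    linarith
  rw [div_le_iff₀ hpan]
  linarith [hTre]

theorem derivative_formula (n : ℕ) (ω : Fin n → ℂ) (hω : ∀ j, ‖ω j‖ = 1)
    (g : ℝ → ℝ)
    (hg : g = fun a => n * Real.log (1 - a ^ n) -
      ∑ j, ∑ k, Real.log ‖(a : ℂ) - (starRingEnd ℂ) (ω j) * ω k‖)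
    (a : ℝ) (ha0 : 0 < a) (ha1 : a < 1)
    (ha : ∀ j k, (a : ℂ) ≠ (starRingEnd ℂ) (ω j) * ω k) :
    ∃ g' : ℝ, HasDerivAt g g' a ∧
      ((a * g' : ℝ) : ℂ) =
        -((n : ℂ) ^ 2 / (1 - (a : ℂ) ^ n)) +
          ∑ j, ∑ k, 1 / (1 - (a : ℂ) * (starRingEnd ℂ) (ω j) * ω k) ∧
      0 ≤ g' := by
  rcases Nat.eq_zero_or_pos n with hn | hn
  · subst hn
    refine ⟨0, ?_, ?_, le_refl 0⟩
    · have hg0 : g = fun _ => (0:ℝ) := by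
        rw [hg]; funext t; simp
      rw [hg0]; exact hasDerivAt_const a 0
    · simp
  -- main case
  set z : Fin n → Fin n → ℂ := fun j k => (starRingEnd ℂ) (ω j) * ω k with hz
  have hz1 : ∀ j k, Complex.normSq (z j k) = 1 := by
    intro j k
    rw [Complex.normSq_eq_norm_sq, hz]
    simp only [norm_mul, RCLike.norm_conj, hω j, hω k, one_mul, one_pow]
  set x : Fin n → Fin n → ℝ := fun j k => (z j k).re with hx
  set q : Fin n → Fin n → ℝ := fun j k => Complex.normSq ((a:ℂ) - z j k) with hq
  have hq0 : ∀ j k, q j k ≠ 0 := by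
    intro j k
    simp only [hq]
    exact (Complex.normSq_pos.2 (sub_ne_zero.2 (ha j k))).ne'
  have hqN : ∀ j k (t : ℝ), Complex.normSq ((t:ℂ) - z j k)
      = (t - x j k)^2 + (z j k).im^2 := by
    intro j k t
    rw [Complex.normSq_apply]
    simp [hx]
    ring
  have h1an : (0:ℝ) < 1 - a^n := by
    have : a^n < 1 := pow_lt_one₀ ha0.le ha1 hn.ne'
    linarith
  set D : ℝ := (n:ℝ) * (-((n:ℝ) * a^(n-1)) / (1 - a^n))
      - ∑ j, ∑ k, (a - x j k) / q j k with hD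
  set S : ℂ := ∑ j, ∑ k, 1 / (1 - (a:ℂ) * (starRingEnd ℂ) (ω j) * ω k) with hS
  have hz1' : ∀ j k, x j k ^2 + (z j k).im^2 = 1 := by
    intro j k
    have := hz1 j k
    rw [Complex.normSq_apply] at this
    simpa [hx, sq] using this
  have hqval : ∀ j k, q j k = a^2 - 2*a*(x j k) + 1 := by
    intro j k
    have h1 : q j k = (a - x j k)^2 + (z j k).im^2 := by
      simp only [hq]; exact hqN j k a
    rw [h1]
    linear_combination hz1' j k
  have hnsq : ∀ j k, Complex.normSq (1 - (a:ℂ) * z j k) = q j k := by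
    intro j k
    rw [Complex.normSq_apply]
    simp only [Complex.sub_re, Complex.sub_im, Complex.one_re, Complex.one_im,
      Complex.mul_re, Complex.mul_im, Complex.ofReal_re, Complex.ofReal_im]
    rw [hqval j k]
    have := hz1' j k
    simp only [hx] at this ⊢
    nlinarith [this]
  have hSalt : S = ∑ j, ∑ k, (1 - (a:ℂ) * z j k)⁻¹ := by
    rw [hS]
    apply Finset.sum_congr rfl; intro j _
    apply Finset.sum_congr rfl; intro k _
    rw [one_div, mul_assoc]
  have hre_term : ∀ j k, ((1 - (a:ℂ) * z j k)⁻¹).re = (1 - a * x j k)/ q j k := by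
    intro j k
    rw [Complex.inv_re, hnsq]
    congr 1
    simp [Complex.sub_re, Complex.mul_re, hx]
  have hSre : S.re = ∑ j, ∑ k, (1 - a * x j k)/ q j k := by
    rw [hSalt, Complex.re_sum]
    apply Finset.sum_congr rfl; intro j _
    rw [Complex.re_sum]
    exact Finset.sum_congr rfl fun k _ => hre_term j k
  have hconjS : (starRingEnd ℂ) S = S := by
    have hct : ∀ j k : Fin n, (starRingEnd ℂ)
        (1 / (1 - (a:ℂ) * (starRingEnd ℂ) (ω j) * ω k))
        = 1 / (1 - (a:ℂ) * (starRingEnd ℂ) (ω k) * ω j) := by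
      intro j k
      rw [map_div₀, map_one]
      congr 1
      rw [map_sub, map_one, map_mul, map_mul, Complex.conj_conj, Complex.conj_ofReal]
      ring
    calc (starRingEnd ℂ) S
        = ∑ j, ∑ k, 1 / (1 - (a:ℂ) * (starRingEnd ℂ) (ω k) * ω j) := by
          rw [hS, map_sum]
          exact Finset.sum_congr rfl fun j _ => by
            rw [map_sum]
            exact Finset.sum_congr rfl fun k _ => hct j k
      _ = S := by rw [hS]; exact Finset.sum_comm
  have hSreal : ((S.re : ℝ) : ℂ) = S := Complex.conj_eq_iff_re.1 hconjS
  have haan : a^(n-1) * a = a^n := by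
    rw [← pow_succ]; congr 1; omega
  have keyterm : ∀ j k, a * ((a - x j k)/q j k) = 1 - (1 - a * x j k)/q j k := by
    intro j k
    field_simp [hq0 j k]
    linear_combination (-1 : ℝ) * hqval j k
  have hsum1 : a * (∑ j, ∑ k, (a - x j k)/q j k)
      = (n:ℝ)^2 - (∑ j, ∑ k, (1 - a * x j k)/q j k) := by
    rw [Finset.mul_sum]
    rw [Finset.sum_congr rfl fun (j : Fin n) _ => Finset.mul_sum Finset.univ _ a]
    rw [Finset.sum_congr rfl fun (j : Fin n) _ =>
      Finset.sum_congr rfl fun (k : Fin n) _ => keyterm j k]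
    rw [Finset.sum_congr rfl fun (j : Fin n) _ => Finset.sum_sub_distrib _ _]
    rw [Finset.sum_sub_distrib]
    simp [Finset.card_univ]
    ring
  have hterm1v : a * ((n:ℝ) * (-((n:ℝ) * a^(n-1)) / (1 - a^n)))
      = -((n:ℝ)^2 * a^n)/(1-a^n) := by
    rw [← haan]; ring
  have h2 : -((n:ℝ)^2 * a^n)/(1-a^n) - (n:ℝ)^2 = -((n:ℝ)^2/(1-a^n)) := by
    field_simp
    ring
  have hfinal : a * D = -((n:ℝ)^2/(1-a^n)) + S.re := by
    rw [hD, mul_sub, hterm1v, hsum1, hSre]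
    set W : ℝ := ∑ j, ∑ k, (1 - a * x j k)/ q j k
    linarith [h2]
  refine ⟨D, ?_, ?_, ?_⟩
  · -- HasDerivAt
    have hgeq : g = fun t => (n:ℝ) * Real.log (1 - t^n) -
        ∑ j, ∑ k, Real.log ((t - x j k)^2 + (z j k).im^2) / 2 := by
      rw [hg]; funext t
      congr 1
      apply Finset.sum_congr rfl; intro j _
      apply Finset.sum_congr rfl; intro k _
      rw [Complex.norm_def, Real.log_sqrt (Complex.normSq_nonneg _),
          hqN j k t]
    rw [hgeq]
    have hterm1 : HasDerivAt (fun t : ℝ => (n:ℝ) * Real.log (1 - t^n))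
        ((n:ℝ) * (-((n:ℝ) * a^(n-1)) / (1 - a^n))) a := by
      have h1 : HasDerivAt (fun t : ℝ => 1 - t^n) (-((n:ℝ) * a^(n-1))) a :=
        (hasDerivAt_pow n a).const_sub 1
      exact (h1.log h1an.ne').const_mul (n:ℝ)
    have hterm2 : ∀ j k, HasDerivAt
        (fun t : ℝ => Real.log ((t - x j k)^2 + (z j k).im^2) / 2)
        ((a - x j k) / q j k) a := by
      intro j k
      have hN : HasDerivAt (fun t : ℝ => (t - x j k)^2 + (z j k).im^2)
          (2 * (a - x j k)) a := by
        have h1 : HasDerivAt (fun t : ℝ => (t - x j k)^2) (2 * (a - x j k)) a := by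
          have := ((hasDerivAt_id a).sub_const (x j k)).fun_pow 2
          simpa using this
        simpa using h1.add_const ((z j k).im^2)
      have hqv : q j k = (a - x j k)^2 + (z j k).im^2 := by
        simp only [hq]; exact hqN j k a
      have hNa : (a - x j k)^2 + (z j k).im^2 ≠ 0 := by
        rw [← hqv]; exact hq0 j k
      have := (hN.log hNa).div_const 2
      refine this.congr_deriv ?_
      rw [hqv]
      field_simp
    exact hterm1.sub (HasDerivAt.fun_sum fun j _ => HasDerivAt.fun_sum fun k _ => hterm2 j k)
  · -- identity
    have hcast : ((a * D : ℝ) : ℂ) = ((-((n:ℝ)^2/(1-a^n)) + S.re : ℝ) : ℂ) := by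
      exact_mod_cast congrArg (fun t : ℝ => (t : ℂ)) hfinal
    rw [hcast]
    push_cast
    rw [hSreal]
  · -- nonnegativity
    have hkey := key_ineq ω hω ha0 ha1
    have hSeq : S = ∑ j, ∑ k, (1 - (a:ℂ) * (starRingEnd ℂ) (ω j) * ω k)⁻¹ := by
      rw [hS]; simp only [one_div]
    rw [← hSeq] at hkey
    have hAD : 0 ≤ a * D := by rw [hfinal]; linarith
    by_contra hDneg
    push_neg at hDneg
    nlinarith


end AuxiliaryLemmas
end

section
/- Let z_1,...,z_n be in the open unit disc with |Λ| < 1 where Λ = (-1)^n ∏ z_j, and suppose that for all m with 1 ≤ m ≤ n-1 the relation (n - (1-|Λ|²)(n-m))·(-1)^m·conj(e_m) = n·conj(Λ)·(-1)^{n-m}·e_{n-m} holds, where e_m = e_m(z_1,...,z_n). Then e_m = 0 for all 1 ≤ m ≤ n-1. -/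
open Finset

theorem esymm_vanish (n : ℕ) (z : Fin n → ℂ) (hz : ∀ j, ‖z j‖ < 1)
    (e : ℕ → ℂ)
    (he : ∀ m, e m = ∑ S ∈ Finset.powersetCard m (Finset.univ : Finset (Fin n)),
      ∏ j ∈ S, z j)
    (Λ : ℂ) (hΛ : Λ = (-1) ^ n * ∏ j, z j)
    (hrel : ∀ m, 1 ≤ m → m ≤ n - 1 →
      ((n : ℂ) - (1 - (‖Λ‖ : ℂ) ^ 2) * ((n - m : ℕ) : ℂ)) * (-1) ^ m *
          (starRingEnd ℂ) (e m)
        = (n : ℂ) * (starRingEnd ℂ) Λ * (-1) ^ (n - m) * e (n - m)) :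
    ∀ m, 1 ≤ m → m ≤ n - 1 → e m = 0 := by
  intro m hm1 hm2
  have hn2 : 2 ≤ n := by omega
  -- ‖Λ‖ < 1
  have hΛn : ‖Λ‖ < 1 := by
    have : ‖Λ‖ = ∏ j, ‖z j‖ := by
      rw [hΛ, norm_mul, norm_pow, norm_neg, norm_one, one_pow, one_mul, norm_prod]
    rw [this]
    by_cases h0 : ∃ j, ‖z j‖ = 0
    · obtain ⟨j, hj⟩ := h0
      calc ∏ j, ‖z j‖ = 0 := Finset.prod_eq_zero (Finset.mem_univ j) hj
        _ < 1 := one_pos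
    · push_neg at h0
      have hne : (Finset.univ : Finset (Fin n)).Nonempty := by
        refine ⟨⟨0, by omega⟩, Finset.mem_univ _⟩
      calc ∏ j, ‖z j‖ < ∏ _j : Fin n, (1 : ℝ) :=
            Finset.prod_lt_prod_of_nonempty
              (fun i _ => lt_of_le_of_ne (norm_nonneg _) (Ne.symm (h0 i)))
              (fun i _ => hz i) hne
        _ = 1 := by simp
  have hΛ2 : (starRingEnd ℂ) Λ * Λ = ((‖Λ‖ : ℂ)) ^ 2 := by
    rw [Complex.conj_mul']
  have hmm : 1 ≤ n - m ∧ n - m ≤ n - 1 := by omega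
  have eq1 := hrel m hm1 hm2
  have eq2 := hrel (n - m) hmm.1 hmm.2
  have hnm : n - (n - m) = m := by omega
  rw [hnm] at eq2
  -- conjugate eq2
  have eq2' := congrArg (starRingEnd ℂ) eq2
  simp only [map_mul, map_sub, map_one, map_pow, map_neg, map_natCast,
    Complex.conj_conj, Complex.conj_ofReal] at eq2'
  set a := (starRingEnd ℂ) (e m) with ha
  set b := e (n - m) with hb
  set c : ℂ := 1 - ((‖Λ‖ : ℂ)) ^ 2 with hc
  have hKM : ((n - m : ℕ) : ℂ) + ((m : ℕ) : ℂ) = (n : ℂ) := by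
    push_cast [Nat.cast_sub (by omega : m ≤ n)]
    ring
  have key : c ^ 2 * ((n - m : ℕ) : ℂ) * ((m : ℕ) : ℂ) * ((-1 : ℂ) ^ m * a) = 0 := by
    linear_combination ((n : ℂ) - c * (m : ℂ)) * eq1
      + ((n : ℂ) * (starRingEnd ℂ) Λ) * eq2'
      + ((n : ℂ) ^ 2 * (-1 : ℂ) ^ m * a) * hΛ2
      + (c * (n : ℂ) * (-1 : ℂ) ^ m * a) * hKM
  have hcne : c ≠ 0 := by
    rw [hc]
    have h1 : ‖Λ‖ ^ 2 < 1 := by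
      nlinarith [norm_nonneg Λ]
    have : (1 : ℂ) - ((‖Λ‖ : ℂ)) ^ 2 = (((1 - ‖Λ‖ ^ 2 : ℝ)) : ℂ) := by push_cast; ring
    rw [this]
    exact_mod_cast (by linarith : (1 - ‖Λ‖ ^ 2 : ℝ) ≠ 0)
  have hK : ((n - m : ℕ) : ℂ) ≠ 0 := Nat.cast_ne_zero.2 (by omega)
  have hM : ((m : ℕ) : ℂ) ≠ 0 := Nat.cast_ne_zero.2 (by omega)
  have hs : ((-1 : ℂ)) ^ m ≠ 0 := by
    simp [pow_ne_zero]
  have ha0 : a = 0 := by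
    have hne : c ^ 2 * ((n - m : ℕ) : ℂ) * ((m : ℕ) : ℂ) ≠ 0 :=
      mul_ne_zero (mul_ne_zero (pow_ne_zero _ hcne) hK) hM
    have h1 : ((-1 : ℂ)) ^ m * a = 0 := (mul_eq_zero.1 key).resolve_left hne
    exact (mul_eq_zero.1 h1).resolve_left hs
  have : (starRingEnd ℂ) (e m) = 0 := ha0
  simpa using congrArg (starRingEnd ℂ) this
end

section
/- Let z_1,...,z_n be the n roots of z^n + Λ with |Λ| < 1, i.e., e_m(z_1,...,z_n) = 0 for 1 ≤ m ≤ n-1 and e_n = (-1)^n Λ. Then ∑_{j,k=1}^n 1/(1 - conj(z_j) z_k) = n²/(1 - |Λ|²). -/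
open Finset Polynomial

theorem additive_equality_at_roots (n : ℕ) (Λ : ℂ) (hΛ : ‖Λ‖ < 1)
    (z : Fin n → ℂ) (hroots : ∏ j, (X - C (z j)) = X ^ n + C Λ) :
    ∑ j, ∑ k, 1 / (1 - (starRingEnd ℂ) (z j) * z k)
      = (n : ℂ) ^ 2 / (1 - (‖Λ‖ : ℂ) ^ 2) := by
  rcases Nat.eq_zero_or_pos n with hn | hn
  · subst hn; simp
  have hn' : n ≠ 0 := hn.ne'
  -- every z j is an n-th root of -Λ
  have hzn : ∀ j, z j ^ n = -Λ := by
    intro j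
    have h := congrArg (eval (z j)) hroots
    rw [eval_prod, Finset.prod_eq_zero (mem_univ j) (by simp)] at h
    simp only [eval_add, eval_pow, eval_X, eval_C] at h
    linear_combination -h
  have hnorm : ∀ j, ‖z j‖ < 1 := by
    intro j
    have h : ‖z j‖ ^ n = ‖Λ‖ := by rw [← norm_pow, hzn j, norm_neg]
    by_contra hge
    push_neg at hge
    have h1 : (1 : ℝ) ≤ ‖z j‖ ^ n := one_le_pow₀ hge
    linarith [h1, hΛ, h.symm ▸ h1]
  set p : ℕ → ℂ := fun m => ∑ j, z j ^ m with hpdef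
  -- key vanishing of power sums
  have hkey : ∀ r, 0 < r → r < n → p r = 0 := by
    intro r hr hrn
    by_cases hΛ0 : Λ = 0
    · have hz0 : ∀ j, z j = 0 := by
        intro j
        have := hzn j
        rw [hΛ0, neg_zero] at this
        exact pow_eq_zero_iff hn' |>.mp this
      simp [hpdef, hz0, zero_pow hr.ne']
    · set q : Polynomial ℂ := X ^ n + C Λ with hq
      have hq0 : q ≠ 0 := (monic_X_pow_add_C Λ hn').ne_zero
      set M : Multiset ℂ := Multiset.map z Finset.univ.val with hM
      have hprodM : (Multiset.map (fun a => X - C a) M).prod = q := by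
        rw [hM, Multiset.map_map, ← hroots]
        rfl
      have hR : q.roots = M := by rw [← hprodM, roots_multiset_prod_X_sub_C]
      have hmem : ∀ a : ℂ, a ∈ M ↔ a ^ n + Λ = 0 := by
        intro a
        rw [← hR, mem_roots hq0]
        simp [hq, IsRoot]
      have hsep : q.Separable := by
        have : (X ^ n - C (-Λ)).Separable :=
          separable_X_pow_sub_C (-Λ) (Nat.cast_ne_zero.mpr hn') (neg_ne_zero.mpr hΛ0)
        rwa [map_neg, sub_neg_eq_add] at this
      have hnodup : M.Nodup := hR ▸ nodup_roots hsep
      set ζ : ℂ := Complex.exp (2 * Real.pi * Complex.I / n) with hζdef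
      have hζ : IsPrimitiveRoot ζ n := Complex.isPrimitiveRoot_exp n hn'
      have hζn : ζ ^ n = 1 := hζ.pow_eq_one
      have hζ0 : ζ ≠ 0 := by
        intro h0
        rw [h0, zero_pow hn'] at hζn
        exact zero_ne_one hζn
      have hrot : Multiset.map (fun a => ζ * a) M = M := by
        apply Multiset.eq_of_le_of_card_le
        · rw [Multiset.le_iff_subset (hnodup.map (mul_right_injective₀ hζ0))]
          intro a ha
          obtain ⟨b, hb, rfl⟩ := Multiset.mem_map.mp ha
          rw [hmem] at hb ⊢
          rw [mul_pow, hζn, one_mul]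
          exact hb
        · simp
      have h1 : p r = (M.map (fun a => a ^ r)).sum := by
        rw [hM, Multiset.map_map]
        rfl
      have hsum : p r = ζ ^ r * p r := by
        calc p r = (M.map (fun a => a ^ r)).sum := h1
          _ = ((Multiset.map (fun a => ζ * a) M).map (fun a => a ^ r)).sum := by rw [hrot]
          _ = (M.map (fun a => ζ ^ r * a ^ r)).sum := by
              rw [Multiset.map_map]
              simp [Function.comp, mul_pow]
          _ = ζ ^ r * (M.map (fun a => a ^ r)).sum := Multiset.sum_map_mul_left
          _ = ζ ^ r * p r := by rw [h1]
      have hne : ζ ^ r ≠ 1 := hζ.pow_ne_one_of_pos_of_lt hr.ne' hrn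
      have hz : (1 - ζ ^ r) * p r = 0 := by linear_combination hsum
      rcases mul_eq_zero.mp hz with h | h
      · exact absurd (by linear_combination -h) hne
      · exact h
  -- power sums in general
  have hpn : ∀ m, p m = if n ∣ m then (n : ℂ) * (-Λ) ^ (m / n) else 0 := by
    intro m
    have hm : m = n * (m / n) + m % n := (Nat.div_add_mod m n).symm
    have hsplit : p m = (-Λ) ^ (m / n) * p (m % n) := by
      simp only [hpdef]
      rw [Finset.mul_sum]
      refine Finset.sum_congr rfl fun j _ => ?_
      conv_lhs => rw [hm]
      rw [pow_add, pow_mul, hzn j]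
    by_cases hdvd : n ∣ m
    · have h0 : m % n = 0 := Nat.mod_eq_zero_of_dvd hdvd
      rw [if_pos hdvd, hsplit, h0]
      simp only [hpdef, pow_zero, Finset.sum_const, card_univ, Fintype.card_fin, nsmul_eq_mul,
        mul_one]
      ring
    · have hne0 : m % n ≠ 0 := fun h => hdvd (Nat.dvd_of_mod_eq_zero h)
      rw [if_neg hdvd, hsplit, hkey _ (Nat.pos_of_ne_zero hne0) (Nat.mod_lt _ hn), mul_zero]
  -- the geometric series bound
  have hlt : ∀ j k : Fin n, ‖(starRingEnd ℂ) (z j) * z k‖ < 1 := by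
    intro j k
    rw [norm_mul, RCLike.norm_conj]
    nlinarith [norm_nonneg (z j), norm_nonneg (z k), hnorm j, hnorm k]
  have hsummable : ∀ j k : Fin n, Summable (fun m : ℕ => ((starRingEnd ℂ) (z j) * z k) ^ m) :=
    fun j k => summable_geometric_of_norm_lt_one (hlt j k)
  calc ∑ j, ∑ k, 1 / (1 - (starRingEnd ℂ) (z j) * z k)
      = ∑ j, ∑ k, ∑' m : ℕ, ((starRingEnd ℂ) (z j) * z k) ^ m := by
        refine Finset.sum_congr rfl fun j _ => Finset.sum_congr rfl fun k _ => ?_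
        rw [one_div, ← tsum_geometric_of_norm_lt_one (hlt j k)]
    _ = ∑ j, ∑' m : ℕ, ∑ k, ((starRingEnd ℂ) (z j) * z k) ^ m := by
        refine Finset.sum_congr rfl fun j _ => ?_
        exact (Summable.tsum_finsetSum fun k _ => hsummable j k).symm
    _ = ∑' m : ℕ, ∑ j, ∑ k, ((starRingEnd ℂ) (z j) * z k) ^ m := by
        refine (Summable.tsum_finsetSum fun j _ => ?_).symm
        exact summable_sum fun k _ => hsummable j k
    _ = ∑' m : ℕ, (starRingEnd ℂ) (p m) * p m := by
        refine tsum_congr fun m => ?_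
        simp only [mul_pow, hpdef, map_sum, map_pow]
        rw [Finset.sum_mul_sum]
    _ = ∑' l : ℕ, (starRingEnd ℂ) (p (n * l)) * p (n * l) := by
        refine (Function.Injective.tsum_eq (g := fun l : ℕ => n * l)
          (f := fun m => (starRingEnd ℂ) (p m) * p m)
          (fun a b h => Nat.eq_of_mul_eq_mul_left hn h) ?_).symm
        intro m hm
        rcases Classical.em (n ∣ m) with ⟨l, rfl⟩ | hdvd
        · exact ⟨l, rfl⟩
        · exact absurd (show (starRingEnd ℂ) (p m) * p m = 0 by
            rw [hpn m, if_neg hdvd]; simp) hm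
    _ = ∑' l : ℕ, (n : ℂ) ^ 2 * ((‖Λ‖ : ℂ) ^ 2) ^ l := by
        refine tsum_congr fun l => ?_
        rw [hpn, if_pos ⟨l, rfl⟩, Nat.mul_div_cancel_left l hn]
        have hc : (starRingEnd ℂ) (-Λ) * (-Λ) = (‖Λ‖ : ℂ) ^ 2 := by
          rw [RCLike.conj_mul, norm_neg]
          norm_cast
        calc (starRingEnd ℂ) ((n : ℂ) * (-Λ) ^ l) * ((n : ℂ) * (-Λ) ^ l)
            = (n : ℂ) ^ 2 * ((starRingEnd ℂ) (-Λ) * (-Λ)) ^ l := by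
              simp only [map_mul, map_pow, map_natCast, mul_pow]
              ring
          _ = (n : ℂ) ^ 2 * ((‖Λ‖ : ℂ) ^ 2) ^ l := by rw [hc]
    _ = (n : ℂ) ^ 2 / (1 - (‖Λ‖ : ℂ) ^ 2) := by
        rw [tsum_mul_left, tsum_geometric_of_norm_lt_one, div_eq_mul_inv]
        have : ‖((‖Λ‖ : ℂ) ^ 2)‖ = ‖Λ‖ ^ 2 := by
          rw [norm_pow, Complex.norm_real, Real.norm_of_nonneg (norm_nonneg Λ)]
        rw [this]
        nlinarith [norm_nonneg Λ]
end

section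
/- Let z_1,...,z_n ∈ ℂ with |z_j| ≤ ρ for some ρ > 0. Then ∏_{j≠k} |1 - conj(z_j) z_k| ≤ max over w_1,...,w_n with |w_l| = ρ of ∏_{j≠k} |1 - conj(w_j) w_k|; i.e., the maximum of ∏_{j≠k} |1 - conj(z_j) z_k| over the closed polydisc of radius ρ is attained with all points on the boundary circle |z| = ρ. -/
open Finset

lemma normconjsym (u v : ℂ) : ‖1 - (starRingEnd ℂ) u * v‖ = ‖1 - (starRingEnd ℂ) v * u‖ := by
  rw [← RCLike.norm_conj (1 - (starRingEnd ℂ) u * v)]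
  simp [map_sub, map_mul, mul_comm]

lemma decomp (n : ℕ) (a : Fin n) (f : Fin n → ℂ) :
    ∏ j, ∏ k ∈ Finset.univ \ {j}, ‖1 - (starRingEnd ℂ) (f j) * f k‖ =
    (∏ k ∈ Finset.univ \ {a}, ‖1 - (starRingEnd ℂ) (f k) * f a‖)^2 *
    ∏ j ∈ Finset.univ \ {a}, ∏ k ∈ (Finset.univ \ {a}) \ {j}, ‖1 - (starRingEnd ℂ) (f j) * f k‖ := by
  simp only [sdiff_singleton_eq_erase]
  rw [← Finset.mul_prod_erase univ _ (mem_univ a)]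
  have h1 : ∏ k ∈ univ.erase a, ‖1 - (starRingEnd ℂ) (f a) * f k‖
      = ∏ k ∈ univ.erase a, ‖1 - (starRingEnd ℂ) (f k) * f a‖ := by
    exact Finset.prod_congr rfl fun k _ => normconjsym _ _
  have h2 : ∀ j ∈ univ.erase a, ∏ k ∈ univ.erase j, ‖1 - (starRingEnd ℂ) (f j) * f k‖
      = ‖1 - (starRingEnd ℂ) (f j) * f a‖ *
        ∏ k ∈ (univ.erase a).erase j, ‖1 - (starRingEnd ℂ) (f j) * f k‖ := by
    intro j hj
    rw [show (univ.erase a).erase j = (univ.erase j).erase a by ext x; simp only [Finset.mem_erase]; tauto]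
    exact (Finset.mul_prod_erase (univ.erase j) _ (by
      simp [Finset.mem_erase, (Finset.mem_erase.mp hj).1.symm] )).symm
  rw [h1, Finset.prod_congr rfl h2, Finset.prod_mul_distrib]
  ring

lemma step (n : ℕ) (ρ : ℝ) (hρ : 0 < ρ) (z : Fin n → ℂ) (hz : ∀ j, ‖z j‖ ≤ ρ) (a : Fin n) :
    ∃ c : ℂ, ‖c‖ = ρ ∧
      ∏ j, ∏ k ∈ Finset.univ \ {j}, ‖1 - (starRingEnd ℂ) (z j) * z k‖ ≤
      ∏ j, ∏ k ∈ Finset.univ \ {j}, ‖1 - (starRingEnd ℂ) ((Function.update z a c) j) * (Function.update z a c) k‖ := by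
  set g : ℂ → ℂ := fun w => ∏ k ∈ Finset.univ \ {a}, (1 - (starRingEnd ℂ) (z k) * w) with hg
  have hdiff : Differentiable ℂ g := by
    apply Differentiable.fun_finsetProd
    intro k _
    exact (differentiable_const _).sub (differentiable_fun_id.const_mul _)
  obtain ⟨c, hc, hmax⟩ := Complex.exists_mem_frontier_isMaxOn_norm
    Metric.isBounded_ball (Metric.nonempty_ball.mpr hρ) hdiff.diffContOnCl
  rw [frontier_ball 0 hρ.ne'] at hc
  rw [closure_ball 0 hρ.ne'] at hmax
  have hcn : ‖c‖ = ρ := by simpa using hc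
  have hza : z a ∈ Metric.closedBall (0:ℂ) ρ := by
    simpa [Metric.mem_closedBall, dist_zero_right] using hz a
  have hkey : ‖g (z a)‖ ≤ ‖g c‖ := hmax hza
  refine ⟨c, hcn, ?_⟩
  rw [decomp n a z, decomp n a (Function.update z a c)]
  have hupd : ∀ k, k ≠ a → Function.update z a c k = z k := fun k hk => Function.update_of_ne hk _ _
  have e1 : (∏ k ∈ Finset.univ \ {a}, ‖1 - (starRingEnd ℂ) (z k) * z a‖) = ‖g (z a)‖ := by
    rw [hg, norm_prod]
  have e2 : (∏ k ∈ Finset.univ \ {a}, ‖1 - (starRingEnd ℂ) ((Function.update z a c) k) * (Function.update z a c) a‖) = ‖g c‖ := by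
    rw [hg, norm_prod]
    refine Finset.prod_congr rfl fun k hk => ?_
    have hk' : k ≠ a := by simpa using (Finset.mem_sdiff.mp hk).2
    rw [hupd k hk', Function.update_self]
  have e3 : (∏ j ∈ Finset.univ \ {a}, ∏ k ∈ (Finset.univ \ {a}) \ {j}, ‖1 - (starRingEnd ℂ) ((Function.update z a c) j) * (Function.update z a c) k‖)
      = ∏ j ∈ Finset.univ \ {a}, ∏ k ∈ (Finset.univ \ {a}) \ {j}, ‖1 - (starRingEnd ℂ) (z j) * z k‖ := by
    refine Finset.prod_congr rfl fun j hj => Finset.prod_congr rfl fun k hk => ?_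
    have hj' : j ≠ a := by simpa using (Finset.mem_sdiff.mp hj).2
    have hk' : k ≠ a := by simpa using (Finset.mem_sdiff.mp (Finset.mem_sdiff.mp hk).1).2
    rw [hupd j hj', hupd k hk']
  rw [e1, e2, e3]
  apply mul_le_mul_of_nonneg_right
  · exact pow_le_pow_left₀ (norm_nonneg _) hkey 2
  · exact Finset.prod_nonneg fun j _ => Finset.prod_nonneg fun k _ => norm_nonneg _

lemma aux (n : ℕ) (ρ : ℝ) (hρ : 0 < ρ) (s : Finset (Fin n)) :
    ∀ z : Fin n → ℂ, (∀ j, ‖z j‖ ≤ ρ) → (∀ l ∉ s, ‖z l‖ = ρ) →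
    ∃ w : Fin n → ℂ, (∀ l, ‖w l‖ = ρ) ∧
      ∏ j, ∏ k ∈ Finset.univ \ {j}, ‖1 - (starRingEnd ℂ) (z j) * z k‖ ≤
        ∏ j, ∏ k ∈ Finset.univ \ {j}, ‖1 - (starRingEnd ℂ) (w j) * w k‖ := by
  induction s using Finset.induction_on with
  | empty => exact fun z hz hb => ⟨z, fun l => hb l (by simp), le_refl _⟩
  | @insert a s ha ih =>
    intro z hz hb
    obtain ⟨c, hc, hle⟩ := step n ρ hρ z hz a
    have hz' : ∀ j, ‖Function.update z a c j‖ ≤ ρ := by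
      intro j
      rcases eq_or_ne j a with rfl | h
      · simp [hc]
      · rw [Function.update_of_ne h]; exact hz j
    have hb' : ∀ l ∉ s, ‖Function.update z a c l‖ = ρ := by
      intro l hl
      rcases eq_or_ne l a with rfl | h
      · simp [hc]
      · rw [Function.update_of_ne h]
        exact hb l (by simp [Finset.mem_insert, h, hl])
    obtain ⟨w, hw, hle2⟩ := ih (Function.update z a c) hz' hb'
    exact ⟨w, hw, hle.trans hle2⟩

theorem maximum_on_boundary (n : ℕ) (ρ : ℝ) (hρ : 0 < ρ)
    (z : Fin n → ℂ) (hz : ∀ j, ‖z j‖ ≤ ρ) :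
    ∃ w : Fin n → ℂ, (∀ l, ‖w l‖ = ρ) ∧
      ∏ j, ∏ k ∈ Finset.univ \ {j}, ‖1 - (starRingEnd ℂ) (z j) * z k‖ ≤
        ∏ j, ∏ k ∈ Finset.univ \ {j}, ‖1 - (starRingEnd ℂ) (w j) * w k‖ := by
  exact aux n ρ hρ Finset.univ z hz (fun l hl => absurd (Finset.mem_univ l) hl)
end

section
/- Let B(z) = ∏_{j=1}^n (z - z_j)/(1 - conj(z_j) z) with z_1,...,z_n in the open unit disc, and f(z) = ∑_{j=1}^n 1/(1 - conj(z_j) z). If there exists a constant c ∈ ℂ with f = c(1 - conj(Λ) B) on the unit disc, where Λ = B(0), then c = n/(1 - |Λ|²) and the elementary symmetric polynomials e_m(z_1,...,z_n) vanish for all 1 ≤ m ≤ n - 1. -/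
open Finset Polynomial

noncomputable def esymmZ (n : ℕ) (z : Fin n → ℂ) (m : ℕ) : ℂ :=
  ∑ t ∈ Finset.powersetCard m (Finset.univ : Finset (Fin n)), ∏ i ∈ t, z i

lemma aux_prod_neg {ι : Type*} (t : Finset ι) (a : ι → ℂ) :
    ∏ i ∈ t, (-a i) = (-1 : ℂ) ^ t.card * ∏ i ∈ t, a i := by
  rw [← Finset.prod_const, ← Finset.prod_mul_distrib]
  simp

lemma aux_coeff_one_sub {ι : Type*} [DecidableEq ι] (s : Finset ι) (a : ι → ℂ) (m : ℕ) :
    (∏ i ∈ s, (1 - C (a i) * X)).coeff m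
      = (-1 : ℂ) ^ m * ∑ t ∈ s.powersetCard m, ∏ i ∈ t, a i := by
  have h1 : (∏ i ∈ s, (1 - C (a i) * X))
      = ∑ t ∈ s.powerset, C (∏ i ∈ t, (-a i)) * X ^ t.card := by
    have h : ∀ i ∈ s, (1 - C (a i) * X : ℂ[X]) = C (-a i) * X + 1 := by
      intro i _; rw [map_neg]; ring
    rw [Finset.prod_congr rfl h, Finset.prod_add]
    refine Finset.sum_congr rfl fun t ht => ?_
    rw [Finset.prod_const_one, mul_one, Finset.prod_mul_distrib, Finset.prod_const, map_prod]
  rw [h1, Polynomial.finset_sum_coeff]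
  rw [Finset.powersetCard_eq_filter, Finset.mul_sum, Finset.sum_filter]
  refine Finset.sum_congr rfl fun t ht => ?_
  rw [Polynomial.coeff_C_mul, Polynomial.coeff_X_pow]
  by_cases h : t.card = m
  · simp [h, aux_prod_neg]
  · rw [if_neg h, if_neg (fun hh => h hh.symm), mul_zero]

lemma aux_coeff_X_sub {ι : Type*} [DecidableEq ι] (s : Finset ι) (z : ι → ℂ) (m : ℕ)
    (hm : m ≤ s.card) :
    (∏ i ∈ s, (X - C (z i))).coeff m
      = (-1 : ℂ) ^ (s.card - m) * ∑ t ∈ s.powersetCard (s.card - m), ∏ i ∈ t, z i := by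
  have h1 : (∏ i ∈ s, (X - C (z i)))
      = ∑ t ∈ s.powerset, C (∏ i ∈ t, (-z i)) * X ^ (s.card - t.card) := by
    have h : ∀ i ∈ s, (X - C (z i) : ℂ[X]) = C (-z i) + X := by
      intro i _; rw [map_neg]; ring
    rw [Finset.prod_congr rfl h, Finset.prod_add]
    refine Finset.sum_congr rfl fun t ht => ?_
    rw [map_prod, Finset.prod_const, Finset.card_sdiff_of_subset (Finset.mem_powerset.mp ht)]
  rw [h1, Polynomial.finset_sum_coeff]
  rw [Finset.powersetCard_eq_filter, Finset.mul_sum, Finset.sum_filter]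
  refine Finset.sum_congr rfl fun t ht => ?_
  have htc : t.card ≤ s.card := Finset.card_le_card (Finset.mem_powerset.mp ht)
  rw [Polynomial.coeff_C_mul, Polynomial.coeff_X_pow]
  by_cases h : t.card = s.card - m
  · rw [if_pos h, if_pos (by omega), mul_one, aux_prod_neg, h]
  · rw [if_neg h, if_neg (by omega), mul_zero]

lemma aux_count {n : ℕ} (m : ℕ) (g : Finset (Fin n) → ℂ) :
    ∑ j : Fin n, ∑ t ∈ Finset.powersetCard m ((univ : Finset (Fin n)).erase j), g t
      = ∑ t ∈ Finset.powersetCard m (univ : Finset (Fin n)), ((n - m : ℕ) : ℂ) * g t := by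
  have h1 : ∀ j : Fin n, Finset.powersetCard m ((univ : Finset (Fin n)).erase j)
      = (Finset.powersetCard m (univ : Finset (Fin n))).filter (fun t => j ∉ t) := by
    intro j; ext t
    simp only [Finset.mem_powersetCard, Finset.mem_filter, Finset.subset_erase]
    tauto
  simp_rw [h1, Finset.sum_filter]
  rw [Finset.sum_comm]
  refine Finset.sum_congr rfl fun t ht => ?_
  rw [← Finset.sum_filter, Finset.sum_const]
  have h2 : (univ : Finset (Fin n)).filter (fun j => j ∉ t) = tᶜ := by
    ext j; simp
  rw [h2, Finset.card_compl, Fintype.card_fin, (Finset.mem_powersetCard.mp ht).2,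
    nsmul_eq_mul]

lemma aux_conj_esymm (n k : ℕ) (w : Fin n → ℂ) :
    (starRingEnd ℂ) (esymmZ n w k) = esymmZ n (fun i => (starRingEnd ℂ) (w i)) k := by
  unfold esymmZ
  rw [map_sum]
  exact Finset.sum_congr rfl fun t _ => map_prod _ _ _

lemma aux_ball_infinite : ({w : ℂ | ‖w‖ < 1} : Set ℂ).Infinite := by
  apply Set.infinite_of_injective_forall_mem
    (f := fun t : ℕ => ((((t : ℝ) + 2)⁻¹ : ℝ) : ℂ))
  · intro s t h
    have h1 : (((s : ℝ) + 2)⁻¹ : ℝ) = (((t : ℝ) + 2)⁻¹ : ℝ) := Complex.ofReal_inj.mp h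
    have h2 : ((s : ℝ) + 2) = ((t : ℝ) + 2) := inv_inj.mp h1
    have : (s : ℝ) = t := by linarith
    exact_mod_cast this
  · intro t
    simp only [Set.mem_setOf_eq]
    rw [Complex.norm_real]
    have h1 : (1 : ℝ) < (t : ℝ) + 2 := by
      have h0 : (0 : ℝ) ≤ (t : ℝ) := Nat.cast_nonneg t
      linarith
    rw [Real.norm_eq_abs, abs_of_pos (by positivity)]
    exact inv_lt_one_of_one_lt₀ h1

theorem functional_equation_case (n : ℕ) (hn : 0 < n) (z : Fin n → ℂ)
    (hz : ∀ j, ‖z j‖ < 1) (B f : ℂ → ℂ)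
    (hB : B = fun w => ∏ j, (w - z j) / (1 - (starRingEnd ℂ) (z j) * w))
    (hf : f = fun w => ∑ j, 1 / (1 - (starRingEnd ℂ) (z j) * w))
    (Λ : ℂ) (hΛ : Λ = B 0) (c : ℂ)
    (hc : ∀ w : ℂ, ‖w‖ < 1 → f w = c * (1 - (starRingEnd ℂ) Λ * B w)) :
    c = (n : ℂ) / (1 - (‖Λ‖ : ℂ) ^ 2) ∧
      ∀ m, 1 ≤ m → m ≤ n - 1 →
        (∑ S ∈ Finset.powersetCard m (Finset.univ : Finset (Fin n)),
          ∏ j ∈ S, z j) = 0 := by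
  classical
  -- nonvanishing of denominators on the disc
  have hd0 : ∀ (w : ℂ), ‖w‖ < 1 → ∀ j, (1 - (starRingEnd ℂ) (z j) * w) ≠ 0 := by
    intro w hw j h
    have h1 : (starRingEnd ℂ) (z j) * w = 1 := by linear_combination -h
    have h2 : ‖(starRingEnd ℂ) (z j) * w‖ < 1 := by
      rw [norm_mul, RCLike.norm_conj]
      nlinarith [norm_nonneg w, norm_nonneg (z j), hz j, hw]
    rw [h1] at h2
    simp at h2
  -- polynomials
  set Qp : Polynomial ℂ := ∏ j, (1 - C ((starRingEnd ℂ) (z j)) * X) with hQp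
  set Pp : Polynomial ℂ := ∏ j, (X - C (z j)) with hPp
  set Rp : Polynomial ℂ :=
    ∑ j : Fin n, ∏ k ∈ (univ : Finset (Fin n)).erase j, (1 - C ((starRingEnd ℂ) (z k)) * X)
    with hRp
  have hQev : ∀ w, Qp.eval w = ∏ j, (1 - (starRingEnd ℂ) (z j) * w) := by
    intro w; rw [hQp]; simp [Polynomial.eval_prod]
  have hPev : ∀ w, Pp.eval w = ∏ j, (w - z j) := by
    intro w; rw [hPp]; simp [Polynomial.eval_prod]
  have hRev : ∀ w, Rp.eval w
      = ∑ j : Fin n, ∏ k ∈ (univ : Finset (Fin n)).erase j, (1 - (starRingEnd ℂ) (z k) * w) := by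
    intro w; rw [hRp]; simp [Polynomial.eval_finset_sum, Polynomial.eval_prod]
  -- root property on the disc
  have hroot : ∀ w : ℂ, ‖w‖ < 1 →
      (Rp - C c * (Qp - C ((starRingEnd ℂ) Λ) * Pp)).eval w = 0 := by
    intro w hw
    have hBQ : B w * Qp.eval w = Pp.eval w := by
      rw [hB, hQev, hPev, ← Finset.prod_mul_distrib]
      exact Finset.prod_congr rfl fun j _ => div_mul_cancel₀ _ (hd0 w hw j)
    have hfQ : f w * Qp.eval w = Rp.eval w := by
      rw [hf, hQev, hRev, Finset.sum_mul]
      refine Finset.sum_congr rfl fun j _ => ?_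
      rw [one_div, inv_mul_eq_div,
        ← Finset.mul_prod_erase univ (fun k => 1 - (starRingEnd ℂ) (z k) * w) (Finset.mem_univ j)]
      exact mul_div_cancel_left₀ _ (hd0 w hw j)
    have h2 := congrArg (· * Qp.eval w) (hc w hw)
    rw [hfQ] at h2
    simp only [Polynomial.eval_sub, Polynomial.eval_mul, Polynomial.eval_C]
    linear_combination h2 - c * (starRingEnd ℂ) Λ * hBQ
  -- polynomial identity
  have hpoly : Rp - C c * (Qp - C ((starRingEnd ℂ) Λ) * Pp) = 0 := by
    apply Polynomial.eq_zero_of_infinite_isRoot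
    exact Set.Infinite.mono (fun w hw => hroot w hw) aux_ball_infinite
  have hcoeff : ∀ p : ℕ, Rp.coeff p = c * (Qp.coeff p - (starRingEnd ℂ) Λ * Pp.coeff p) := by
    intro p
    have h := congrArg (fun q => Polynomial.coeff q p) hpoly
    simp only [Polynomial.coeff_sub, Polynomial.coeff_C_mul, Polynomial.coeff_zero] at h
    linear_combination h
  -- coefficient formulas
  have hQc : ∀ p : ℕ, Qp.coeff p = (-1 : ℂ) ^ p * esymmZ n (fun i => (starRingEnd ℂ) (z i)) p := by
    intro p; rw [hQp]; exact aux_coeff_one_sub _ _ p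
  have hPc : ∀ p : ℕ, p ≤ n → Pp.coeff p = (-1 : ℂ) ^ (n - p) * esymmZ n z (n - p) := by
    intro p hp
    rw [hPp]
    have h := aux_coeff_X_sub (univ : Finset (Fin n)) z p
      (by rwa [Finset.card_univ, Fintype.card_fin])
    rwa [Finset.card_univ, Fintype.card_fin] at h
  have hRc : ∀ p : ℕ, Rp.coeff p
      = (-1 : ℂ) ^ p * ((n - p : ℕ) : ℂ) * esymmZ n (fun i => (starRingEnd ℂ) (z i)) p := by
    intro p
    rw [hRp, Polynomial.finset_sum_coeff]
    calc ∑ j : Fin n,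
          (∏ k ∈ (univ : Finset (Fin n)).erase j, (1 - C ((starRingEnd ℂ) (z k)) * X)).coeff p
        = ∑ j : Fin n, ((-1 : ℂ) ^ p *
            ∑ t ∈ Finset.powersetCard p ((univ : Finset (Fin n)).erase j),
              ∏ i ∈ t, (starRingEnd ℂ) (z i)) :=
          Finset.sum_congr rfl fun j _ => aux_coeff_one_sub _ _ p
      _ = (-1 : ℂ) ^ p * ∑ j : Fin n,
            ∑ t ∈ Finset.powersetCard p ((univ : Finset (Fin n)).erase j),
              ∏ i ∈ t, (starRingEnd ℂ) (z i) := by rw [← Finset.mul_sum]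
      _ = (-1 : ℂ) ^ p * ∑ t ∈ Finset.powersetCard p (univ : Finset (Fin n)),
            ((n - p : ℕ) : ℂ) * ∏ i ∈ t, (starRingEnd ℂ) (z i) := by rw [aux_count]
      _ = (-1 : ℂ) ^ p * ((n - p : ℕ) : ℂ) * esymmZ n (fun i => (starRingEnd ℂ) (z i)) p := by
          rw [← Finset.mul_sum, ← mul_assoc]; rfl
  -- main coefficient identity
  have hmain : ∀ p : ℕ, p ≤ n →
      (-1 : ℂ) ^ p * ((n - p : ℕ) : ℂ) * esymmZ n (fun i => (starRingEnd ℂ) (z i)) p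
        = c * ((-1 : ℂ) ^ p * esymmZ n (fun i => (starRingEnd ℂ) (z i)) p
            - (starRingEnd ℂ) Λ * ((-1 : ℂ) ^ (n - p) * esymmZ n z (n - p))) := by
    intro p hp
    have h := hcoeff p
    rwa [hRc p, hQc p, hPc p hp] at h
  -- value of Λ
  have hΛprod : Λ = ∏ j, -(z j) := by
    rw [hΛ, hB]; simp
  have hΛE : Λ = (-1 : ℂ) ^ n * ∏ j, z j := by
    rw [hΛprod, aux_prod_neg, Finset.card_univ, Fintype.card_fin]
  have hΛconj : (starRingEnd ℂ) Λ = (-1 : ℂ) ^ n * (starRingEnd ℂ) (∏ j, z j) := by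
    rw [hΛE, map_mul, map_pow, map_neg, map_one]
  have hnorm : ‖Λ‖ < 1 := by
    rw [hΛprod, norm_prod]
    simp only [norm_neg]
    calc ∏ j, ‖z j‖
        = ‖z ⟨0, hn⟩‖ * ∏ j ∈ (univ : Finset (Fin n)).erase ⟨0, hn⟩, ‖z j‖ :=
          (Finset.mul_prod_erase _ _ (Finset.mem_univ _)).symm
      _ ≤ ‖z ⟨0, hn⟩‖ * 1 := by
          refine mul_le_mul_of_nonneg_left ?_ (norm_nonneg _)
          exact Finset.prod_le_one (fun i _ => norm_nonneg _) (fun i _ => (hz i).le)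
      _ < 1 := by rw [mul_one]; exact hz ⟨0, hn⟩
  have ht : (starRingEnd ℂ) Λ * Λ = ((‖Λ‖ : ℝ) : ℂ) ^ 2 := Complex.conj_mul' Λ
  have hc0 : (n : ℂ) = c * (1 - (starRingEnd ℂ) Λ * Λ) := by
    have h := hc 0 (by simp)
    rw [← hΛ] at h
    have hf0 : f 0 = (n : ℂ) := by rw [hf]; simp
    rw [hf0] at h
    exact h
  have hden : (1 : ℂ) - ((‖Λ‖ : ℝ) : ℂ) ^ 2 ≠ 0 := by
    have h2 : ‖Λ‖ ^ 2 < 1 := by nlinarith [norm_nonneg Λ]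
    intro h
    rw [sub_eq_zero] at h
    have h3 : ((1 : ℝ) : ℂ) = ((‖Λ‖ ^ 2 : ℝ) : ℂ) := by push_cast; exact h
    have := Complex.ofReal_inj.mp h3
    linarith
  have hcval : c = (n : ℂ) / (1 - ((‖Λ‖ : ℝ) : ℂ) ^ 2) := by
    rw [eq_div_iff hden]
    linear_combination -hc0 + c * ht
  have hcc : (starRingEnd ℂ) c = c := by
    rw [hcval]
    simp [map_div₀, Complex.conj_ofReal]
  refine ⟨hcval, ?_⟩
  intro m hm1 hm2
  have hmn : m ≤ n := by omega
  have hkn : n - m ≤ n := by omega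
  have hnm : n - (n - m) = m := by omega
  have hsplit : (-1 : ℂ) ^ n = (-1 : ℂ) ^ m * (-1 : ℂ) ^ (n - m) := by
    rw [← pow_add]; congr 1; omega
  have hsqm : (-1 : ℂ) ^ m * (-1 : ℂ) ^ m = 1 := by
    rw [← pow_add]; exact Even.neg_one_pow ⟨m, rfl⟩
  have hsqk : (-1 : ℂ) ^ (n - m) * (-1 : ℂ) ^ (n - m) = 1 := by
    rw [← pow_add]; exact Even.neg_one_pow ⟨n - m, rfl⟩
  have h1 := hmain m hmn
  have h2 := hmain (n - m) hkn
  rw [hnm] at h2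
  rw [hΛconj, hsplit] at h1 h2
  -- cancel signs
  have hα : ((n - m : ℕ) : ℂ) * esymmZ n (fun i => (starRingEnd ℂ) (z i)) m
      = c * (esymmZ n (fun i => (starRingEnd ℂ) (z i)) m
          - (starRingEnd ℂ) (∏ j, z j) * esymmZ n z (n - m)) := by
    linear_combination ((-1 : ℂ) ^ m) * h1
      + (c * esymmZ n (fun i => (starRingEnd ℂ) (z i)) m
          - ((n - m : ℕ) : ℂ) * esymmZ n (fun i => (starRingEnd ℂ) (z i)) m
          - c * (starRingEnd ℂ) (∏ j, z j) * esymmZ n z (n - m)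
            * ((-1 : ℂ) ^ (n - m)) * ((-1 : ℂ) ^ (n - m))) * hsqm
      + (-(c * (starRingEnd ℂ) (∏ j, z j) * esymmZ n z (n - m))) * hsqk
  have hβ' : ((m : ℕ) : ℂ) * esymmZ n (fun i => (starRingEnd ℂ) (z i)) (n - m)
      = c * (esymmZ n (fun i => (starRingEnd ℂ) (z i)) (n - m)
          - (starRingEnd ℂ) (∏ j, z j) * esymmZ n z m) := by
    linear_combination ((-1 : ℂ) ^ (n - m)) * h2
      + (c * esymmZ n (fun i => (starRingEnd ℂ) (z i)) (n - m)
          - ((m : ℕ) : ℂ) * esymmZ n (fun i => (starRingEnd ℂ) (z i)) (n - m)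
          - c * (starRingEnd ℂ) (∏ j, z j) * esymmZ n z m
            * ((-1 : ℂ) ^ m) * ((-1 : ℂ) ^ m)) * hsqk
      + (-(c * (starRingEnd ℂ) (∏ j, z j) * esymmZ n z m)) * hsqm
  -- conjugate hβ'
  have hβ : ((m : ℕ) : ℂ) * esymmZ n z (n - m)
      = c * (esymmZ n z (n - m) - (∏ j, z j) * esymmZ n (fun i => (starRingEnd ℂ) (z i)) m) := by
    have h := congrArg (starRingEnd ℂ) hβ'
    simp only [map_mul, map_sub, map_natCast, aux_conj_esymm, Complex.conj_conj, hcc,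
      map_prod] at h
    convert h using 2
  -- combine with hcn
  have hΛΛ : (starRingEnd ℂ) Λ * Λ = (starRingEnd ℂ) (∏ j, z j) * (∏ j, z j) := by
    rw [hΛconj, hΛE]
    have hsqn : (-1 : ℂ) ^ n * (-1 : ℂ) ^ n = 1 := by
      rw [← pow_add]; exact Even.neg_one_pow ⟨n, rfl⟩
    linear_combination ((starRingEnd ℂ) (∏ j, z j) * (∏ j, z j)) * hsqn
  have hcn : c * (1 - (starRingEnd ℂ) (∏ j, z j) * (∏ j, z j)) = (n : ℂ) := by
    rw [← hΛΛ]
    exact hc0.symm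
  have hmk : ((m : ℕ) : ℂ) + ((n - m : ℕ) : ℂ) = (n : ℂ) := by
    exact_mod_cast congrArg (Nat.cast : ℕ → ℂ) (by omega : m + (n - m) = n)
  have hfin : ((m : ℕ) : ℂ) * ((n - m : ℕ) : ℂ)
      * esymmZ n (fun i => (starRingEnd ℂ) (z i)) m = 0 := by
    linear_combination (((m : ℕ) : ℂ) - c) * hα
      + (-(c * (starRingEnd ℂ) (∏ j, z j))) * hβ
      + c * esymmZ n (fun i => (starRingEnd ℂ) (z i)) m * hmk
      + (-(c * esymmZ n (fun i => (starRingEnd ℂ) (z i)) m)) * hcn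
  have hm0 : ((m : ℕ) : ℂ) ≠ 0 := Nat.cast_ne_zero.mpr (by omega)
  have hk0 : ((n - m : ℕ) : ℂ) ≠ 0 := Nat.cast_ne_zero.mpr (by omega)
  have hu0 : esymmZ n (fun i => (starRingEnd ℂ) (z i)) m = 0 := by
    rcases mul_eq_zero.mp hfin with h | h
    · exact absurd h (mul_ne_zero hm0 hk0)
    · exact h
  have h := congrArg (starRingEnd ℂ) hu0
  rw [aux_conj_esymm] at h
  simp only [Complex.conj_conj, map_zero] at h
  exact h
end
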